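/- arXiv:1401.0352 — 11 statements merged into one kernel-verified Lean document; each statement's English description precedes it below -/
import Mathlib

section
/- Let S : ℝ² → ℝ be smooth with partial derivatives S₁, S₂ (identify ℂ ≅ ℝ²), and let ω_can(u,v) = Re(u₁v₂ − v₁u₂) on ℂ². Define ψ on {(z₁,z₂) ∈ ℂ² : z₂ ≠ 0} by ψ(z₁,z₂) = ( e^{S₁(c) − i·S₂(c)} · z₂^{−1} , e^{−S₁(c) + i·S₂(c)} · z₁ z₂² ), where c = z₁z₂. Then ψ preserves the fibration, i.e. (ψ(z))₁ · (ψ(z))₂ = z₁z₂ for every z with z₂ ≠ 0, and ψ is a symplectomorphism for ω_can: for every such z and all u, v ∈ ℂ², ω_can(Dψ(z)u, Dψ(z)v) = ω_can(u,v), where Dψ(z) is the real Fréchet derivative of ψ at z. -/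
set_option maxHeartbeats 2000000

open Complex ContinuousLinearMap

private lemma aux_alg (z1 z2 u1 u2 v1 v2 e f gu gv a b : ℂ) (hef : e * f = 1) (hz : z2 ≠ 0)
    (ha : a = z1 * u2 + z2 * u1) (hb : b = z1 * v2 + z2 * v1) :
    (e * (-(z2 ^ 2)⁻¹ * u2) + z2⁻¹ * (e * gu))
      * (f * z1 * (2 * z2 * v2) + z2 ^ 2 * (f * v1 + z1 * (f * (-gv))))
    - (e * (-(z2 ^ 2)⁻¹ * v2) + z2⁻¹ * (e * gv))
      * (f * z1 * (2 * z2 * u2) + z2 ^ 2 * (f * u1 + z1 * (f * (-gu))))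
    = (u1 * v2 - v1 * u2) + (gu * b - gv * a) := by
  subst ha hb
  have he : e ≠ 0 := left_ne_zero_of_mul_eq_one hef
  have hf : f = e⁻¹ := by field_simp; linear_combination hef
  subst hf
  field_simp
  ring

private lemma aux_re (d11 d12 d21 d22 : ℝ) (hd : d12 = d21) (a b : ℂ) :
    ((((d11 * a.re + d12 * a.im : ℝ) : ℂ) - I * ((d21 * a.re + d22 * a.im : ℝ) : ℂ)) * b
     - (((d11 * b.re + d12 * b.im : ℝ) : ℂ) - I * ((d21 * b.re + d22 * b.im : ℝ) : ℂ)) * a).re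
    = 0 := by
  subst hd
  simp [Complex.mul_re, Complex.sub_re, Complex.sub_im, Complex.mul_im]
  ring

private lemma aux_dec (L : (ℝ × ℝ) →L[ℝ] ℝ) (w : ℝ × ℝ) :
    L w = L (1, 0) * w.1 + L (0, 1) * w.2 := by
  have hw : w = w.1 • ((1:ℝ), (0:ℝ)) + w.2 • ((0:ℝ), (1:ℝ)) := by
    ext <;> simp
  conv_lhs => rw [hw]
  rw [map_add, map_smul, map_smul]
  simp [smul_eq_mul]
  ring

theorem stmt2 (S : ℝ × ℝ → ℝ) (hS : ContDiff ℝ (⊤ : ℕ∞) S)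
    (S₁ S₂ : ℝ × ℝ → ℝ)
    (hS₁ : ∀ p, S₁ p = fderiv ℝ S p (1, 0))
    (hS₂ : ∀ p, S₂ p = fderiv ℝ S p (0, 1))
    (ω : ℂ × ℂ → ℂ × ℂ → ℝ)
    (hω : ∀ u v, ω u v = (u.1 * v.2 - v.1 * u.2).re)
    (ψ : ℂ × ℂ → ℂ × ℂ)
    (hψ : ∀ z : ℂ × ℂ, ψ z =
      (Complex.exp ((S₁ ((z.1 * z.2).re, (z.1 * z.2).im) : ℂ)
          - Complex.I * (S₂ ((z.1 * z.2).re, (z.1 * z.2).im) : ℂ)) * z.2⁻¹,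
       Complex.exp (-(S₁ ((z.1 * z.2).re, (z.1 * z.2).im) : ℂ)
          + Complex.I * (S₂ ((z.1 * z.2).re, (z.1 * z.2).im) : ℂ)) * z.1 * z.2 ^ 2)) :
    ∀ z : ℂ × ℂ, z.2 ≠ 0 →
      (ψ z).1 * (ψ z).2 = z.1 * z.2
      ∧ ∀ u v : ℂ × ℂ, ω (fderiv ℝ ψ z u) (fderiv ℝ ψ z v) = ω u v := by
  have hψfun : ψ = fun z : ℂ × ℂ =>
      (Complex.exp ((S₁ ((z.1 * z.2).re, (z.1 * z.2).im) : ℂ)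
          - Complex.I * (S₂ ((z.1 * z.2).re, (z.1 * z.2).im) : ℂ)) * z.2⁻¹,
       Complex.exp (-(S₁ ((z.1 * z.2).re, (z.1 * z.2).im) : ℂ)
          + Complex.I * (S₂ ((z.1 * z.2).re, (z.1 * z.2).im) : ℂ)) * z.1 * z.2 ^ 2) :=
    funext hψ
  subst hψfun
  intro z hz
  constructor
  · -- fibration
    simp only
    set A : ℂ := (S₁ ((z.1 * z.2).re, (z.1 * z.2).im) : ℂ)
      - Complex.I * (S₂ ((z.1 * z.2).re, (z.1 * z.2).im) : ℂ) with hA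
    have hB : -(S₁ ((z.1 * z.2).re, (z.1 * z.2).im) : ℂ)
        + Complex.I * (S₂ ((z.1 * z.2).re, (z.1 * z.2).im) : ℂ) = -A := by rw [hA]; ring
    rw [hB]
    have h : Complex.exp A * Complex.exp (-A) = 1 := by
      rw [← Complex.exp_add]; simp
    have h2 : z.2 ^ 2 * z.2⁻¹ = z.2 := by field_simp
    calc Complex.exp A * z.2⁻¹ * (Complex.exp (-A) * z.1 * z.2 ^ 2)
        = Complex.exp A * Complex.exp (-A) * z.1 * (z.2 ^ 2 * z.2⁻¹) := by ring
      _ = z.1 * z.2 := by rw [h, h2]; ring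
  · -- symplectic
    intro u v
    set c : ℂ := z.1 * z.2 with hc
    set p : ℝ × ℝ := (c.re, c.im) with hp
    set f'' : (ℝ × ℝ) →L[ℝ] (ℝ × ℝ) →L[ℝ] ℝ := fderiv ℝ (fderiv ℝ S) p with hf''
    have hS' : ContDiff ℝ (⊤ : ℕ∞) (fderiv ℝ S) := hS.fderiv_right (by simp)
    have hsecond : HasFDerivAt (fderiv ℝ S) f'' p :=
      (hS'.differentiable (by simp) p).hasFDerivAt
    have hsym0 : f'' (0, 1) (1, 0) = f'' (1, 0) (0, 1) :=
      second_derivative_symmetric (fun y => (hS.differentiable (by simp) y).hasFDerivAt)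
        hsecond (0, 1) (1, 0)
    set L₁ : (ℝ × ℝ) →L[ℝ] ℝ := (ContinuousLinearMap.apply ℝ ℝ ((1:ℝ), (0:ℝ))).comp f'' with hL₁
    set L₂ : (ℝ × ℝ) →L[ℝ] ℝ := (ContinuousLinearMap.apply ℝ ℝ ((0:ℝ), (1:ℝ))).comp f'' with hL₂
    have hDS₁ : HasFDerivAt S₁ L₁ p := by
      have h1 : S₁ = fun q => (ContinuousLinearMap.apply ℝ ℝ ((1:ℝ), (0:ℝ))) (fderiv ℝ S q) :=
        funext fun q => hS₁ q
      rw [h1]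
      exact (ContinuousLinearMap.apply ℝ ℝ ((1:ℝ),(0:ℝ))).hasFDerivAt.comp p hsecond
    have hDS₂ : HasFDerivAt S₂ L₂ p := by
      have h2 : S₂ = fun q => (ContinuousLinearMap.apply ℝ ℝ ((0:ℝ), (1:ℝ))) (fderiv ℝ S q) :=
        funext fun q => hS₂ q
      rw [h2]
      exact (ContinuousLinearMap.apply ℝ ℝ ((0:ℝ),(1:ℝ))).hasFDerivAt.comp p hsecond
    set M : (ℂ × ℂ) →L[ℝ] ℂ :=
      ((z.1 • ContinuousLinearMap.snd ℂ ℂ ℂ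
        + z.2 • ContinuousLinearMap.fst ℂ ℂ ℂ).restrictScalars ℝ) with hM
    have hmul : HasFDerivAt (fun w : ℂ × ℂ => w.1 * w.2) M z :=
      ((hasFDerivAt_fst (𝕜 := ℂ)).mul (hasFDerivAt_snd (𝕜 := ℂ))).restrictScalars ℝ
    set J : ℂ →L[ℝ] ℝ × ℝ := Complex.equivRealProdCLM.toContinuousLinearMap with hJ
    have hpr : HasFDerivAt (fun w : ℂ × ℂ => (((w.1 * w.2).re, (w.1 * w.2).im) : ℝ × ℝ))
        (J.comp M) z := J.hasFDerivAt.comp z hmul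
    have h1 : HasFDerivAt (fun w : ℂ × ℂ => S₁ ((w.1*w.2).re, (w.1*w.2).im))
        ((L₁.comp J).comp M) z := by
      have := hDS₁.comp z hpr
      rwa [← ContinuousLinearMap.comp_assoc] at this
    have h2 : HasFDerivAt (fun w : ℂ × ℂ => S₂ ((w.1*w.2).re, (w.1*w.2).im))
        ((L₂.comp J).comp M) z := by
      have := hDS₂.comp z hpr
      rwa [← ContinuousLinearMap.comp_assoc] at this
    set N₁ : (ℂ × ℂ) →L[ℝ] ℂ := Complex.ofRealCLM.comp ((L₁.comp J).comp M) with hN₁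
    set N₂ : (ℂ × ℂ) →L[ℝ] ℂ := Complex.ofRealCLM.comp ((L₂.comp J).comp M) with hN₂
    have h1c : HasFDerivAt (fun w : ℂ × ℂ => (S₁ ((w.1*w.2).re, (w.1*w.2).im) : ℂ)) N₁ z :=
      Complex.ofRealCLM.hasFDerivAt.comp z h1
    have h2c : HasFDerivAt (fun w : ℂ × ℂ => (S₂ ((w.1*w.2).re, (w.1*w.2).im) : ℂ)) N₂ z :=
      Complex.ofRealCLM.hasFDerivAt.comp z h2
    have hG : HasFDerivAt (fun w : ℂ × ℂ =>
        (S₁ ((w.1*w.2).re, (w.1*w.2).im) : ℂ) - Complex.I * (S₂ ((w.1*w.2).re, (w.1*w.2).im) : ℂ))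
        (N₁ - Complex.I • N₂) z := h1c.sub (h2c.const_mul Complex.I)
    have hH : HasFDerivAt (fun w : ℂ × ℂ =>
        -(S₁ ((w.1*w.2).re, (w.1*w.2).im) : ℂ) + Complex.I * (S₂ ((w.1*w.2).re, (w.1*w.2).im) : ℂ))
        (-N₁ + Complex.I • N₂) z := h1c.neg.add (h2c.const_mul Complex.I)
    set e : ℂ := Complex.exp ((S₁ p : ℂ) - Complex.I * (S₂ p : ℂ)) with he
    set f : ℂ := Complex.exp (-(S₁ p : ℂ) + Complex.I * (S₂ p : ℂ)) with hf
    have hexp1 : HasFDerivAt (fun w : ℂ × ℂ => Complex.exp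
        ((S₁ ((w.1*w.2).re, (w.1*w.2).im) : ℂ) - Complex.I * (S₂ ((w.1*w.2).re, (w.1*w.2).im) : ℂ)))
        (e • (N₁ - Complex.I • N₂)) z := hG.cexp
    have hexp2 : HasFDerivAt (fun w : ℂ × ℂ => Complex.exp
        (-(S₁ ((w.1*w.2).re, (w.1*w.2).im) : ℂ) + Complex.I * (S₂ ((w.1*w.2).re, (w.1*w.2).im) : ℂ)))
        (f • (-N₁ + Complex.I • N₂)) z := hH.cexp
    set Dinv : (ℂ × ℂ) →L[ℝ] ℂ :=
      ((smulRight (1 : ℂ →L[ℂ] ℂ) (-(z.2 ^ 2)⁻¹)).comp (ContinuousLinearMap.snd ℂ ℂ ℂ)).restrictScalars ℝ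
      with hDinv
    have hinv : HasFDerivAt (fun w : ℂ × ℂ => w.2⁻¹) Dinv z :=
      ((hasFDerivAt_inv hz).comp z (hasFDerivAt_snd (𝕜 := ℂ))).restrictScalars ℝ
    set Dsq : (ℂ × ℂ) →L[ℝ] ℂ :=
      (((2 : ℂ) * z.2 ^ 1) • ContinuousLinearMap.snd ℂ ℂ ℂ).restrictScalars ℝ with hDsq
    have hsq : HasFDerivAt (fun w : ℂ × ℂ => w.2 ^ 2) Dsq z := by
      have := ((hasDerivAt_pow 2 z.2).comp_hasFDerivAt z (hasFDerivAt_snd (𝕜 := ℂ))).restrictScalars ℝ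
      have e2 : ((2:ℂ) * z.2 ^ 1) = ((2:ℕ):ℂ) * z.2 ^ (2 - 1) := by norm_num
      rw [hDsq, e2]
      exact this
    set D1 : (ℂ × ℂ) →L[ℝ] ℂ :=
      e • Dinv + z.2⁻¹ • (e • (N₁ - Complex.I • N₂)) with hD1
    have hc1 : HasFDerivAt (fun w : ℂ × ℂ => Complex.exp
        ((S₁ ((w.1*w.2).re, (w.1*w.2).im) : ℂ) - Complex.I * (S₂ ((w.1*w.2).re, (w.1*w.2).im) : ℂ))
        * w.2⁻¹) D1 z := hexp1.mul hinv
    set C : (ℂ × ℂ) →L[ℝ] ℂ :=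
      f • ContinuousLinearMap.fst ℝ ℂ ℂ + z.1 • (f • (-N₁ + Complex.I • N₂)) with hC
    have hcin : HasFDerivAt (fun w : ℂ × ℂ => Complex.exp
        (-(S₁ ((w.1*w.2).re, (w.1*w.2).im) : ℂ) + Complex.I * (S₂ ((w.1*w.2).re, (w.1*w.2).im) : ℂ))
        * w.1) C z := hexp2.mul hasFDerivAt_fst
    set D2 : (ℂ × ℂ) →L[ℝ] ℂ := (f * z.1) • Dsq + (z.2 ^ 2) • C with hD2
    have hc2 : HasFDerivAt (fun w : ℂ × ℂ => Complex.exp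
        (-(S₁ ((w.1*w.2).re, (w.1*w.2).im) : ℂ) + Complex.I * (S₂ ((w.1*w.2).re, (w.1*w.2).im) : ℂ))
        * w.1 * w.2 ^ 2) D2 z := hcin.mul hsq
    have hD : HasFDerivAt (fun w : ℂ × ℂ =>
        (Complex.exp ((S₁ ((w.1 * w.2).re, (w.1 * w.2).im) : ℂ)
            - Complex.I * (S₂ ((w.1 * w.2).re, (w.1 * w.2).im) : ℂ)) * w.2⁻¹,
         Complex.exp (-(S₁ ((w.1 * w.2).re, (w.1 * w.2).im) : ℂ)
            + Complex.I * (S₂ ((w.1 * w.2).re, (w.1 * w.2).im) : ℂ)) * w.1 * w.2 ^ 2))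
        (D1.prod D2) z := hc1.prodMk hc2
    have hfd := hD.fderiv
    rw [hω, hω, hfd]
    -- abbreviations
    have hef : e * f = 1 := by
      rw [he, hf, ← Complex.exp_add,
        show ((S₁ p : ℂ) - Complex.I * (S₂ p : ℂ)) + (-(S₁ p : ℂ) + Complex.I * (S₂ p : ℂ))
          = 0 by ring, Complex.exp_zero]
    set au : ℂ := z.1 * u.2 + z.2 * u.1 with hau
    set av : ℂ := z.1 * v.2 + z.2 * v.1 with hav
    set gu : ℂ := ((L₁ (au.re, au.im) : ℝ) : ℂ) - Complex.I * ((L₂ (au.re, au.im) : ℝ) : ℂ)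
      with hgu
    set gv : ℂ := ((L₁ (av.re, av.im) : ℝ) : ℂ) - Complex.I * ((L₂ (av.re, av.im) : ℝ) : ℂ)
      with hgv
    have hDu1 : D1 u = e * (-(z.2 ^ 2)⁻¹ * u.2) + z.2⁻¹ * (e * gu) := by
      rw [hgu, hau]
      simp only [hD1, hN₁, hN₂, hDinv, hM, ContinuousLinearMap.add_apply,
        ContinuousLinearMap.coe_smul', Pi.smul_apply, ContinuousLinearMap.coe_comp',
        Function.comp_apply, ContinuousLinearMap.coe_restrictScalars',
        ContinuousLinearMap.smulRight_apply, ContinuousLinearMap.one_apply,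
        ContinuousLinearMap.coe_snd', ContinuousLinearMap.coe_fst',
        Complex.ofRealCLM_apply, ContinuousLinearEquiv.coe_coe,
        Complex.equivRealProdCLM_apply, ContinuousLinearMap.sub_apply, smul_eq_mul, hJ]
      ring
    have hDv1 : D1 v = e * (-(z.2 ^ 2)⁻¹ * v.2) + z.2⁻¹ * (e * gv) := by
      rw [hgv, hav]
      simp only [hD1, hN₁, hN₂, hDinv, hM, ContinuousLinearMap.add_apply,
        ContinuousLinearMap.coe_smul', Pi.smul_apply, ContinuousLinearMap.coe_comp',
        Function.comp_apply, ContinuousLinearMap.coe_restrictScalars',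
        ContinuousLinearMap.smulRight_apply, ContinuousLinearMap.one_apply,
        ContinuousLinearMap.coe_snd', ContinuousLinearMap.coe_fst',
        Complex.ofRealCLM_apply, ContinuousLinearEquiv.coe_coe,
        Complex.equivRealProdCLM_apply, ContinuousLinearMap.sub_apply, smul_eq_mul, hJ]
      ring
    have hDu2 : D2 u = f * z.1 * (2 * z.2 * u.2) + z.2 ^ 2 * (f * u.1 + z.1 * (f * (-gu))) := by
      rw [hgu, hau]
      simp only [hD2, hC, hDsq, hN₁, hN₂, hM, ContinuousLinearMap.add_apply,
        ContinuousLinearMap.coe_smul', Pi.smul_apply, ContinuousLinearMap.coe_comp',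
        Function.comp_apply, ContinuousLinearMap.coe_restrictScalars',
        ContinuousLinearMap.smulRight_apply, ContinuousLinearMap.one_apply,
        ContinuousLinearMap.coe_snd', ContinuousLinearMap.coe_fst',
        Complex.ofRealCLM_apply, ContinuousLinearEquiv.coe_coe,
        Complex.equivRealProdCLM_apply, ContinuousLinearMap.sub_apply,
        ContinuousLinearMap.neg_apply, smul_eq_mul, hJ]
      ring
    have hDv2 : D2 v = f * z.1 * (2 * z.2 * v.2) + z.2 ^ 2 * (f * v.1 + z.1 * (f * (-gv))) := by
      rw [hgv, hav]
      simp only [hD2, hC, hDsq, hN₁, hN₂, hM, ContinuousLinearMap.add_apply,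
        ContinuousLinearMap.coe_smul', Pi.smul_apply, ContinuousLinearMap.coe_comp',
        Function.comp_apply, ContinuousLinearMap.coe_restrictScalars',
        ContinuousLinearMap.smulRight_apply, ContinuousLinearMap.one_apply,
        ContinuousLinearMap.coe_snd', ContinuousLinearMap.coe_fst',
        Complex.ofRealCLM_apply, ContinuousLinearEquiv.coe_coe,
        Complex.equivRealProdCLM_apply, ContinuousLinearMap.sub_apply,
        ContinuousLinearMap.neg_apply, smul_eq_mul, hJ]
      ring
    simp only [ContinuousLinearMap.prod_apply]
    rw [hDu1, hDu2, hDv1, hDv2]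
    rw [aux_alg z.1 z.2 u.1 u.2 v.1 v.2 e f gu gv au av hef hz hau hav]
    have hd : L₁ ((0:ℝ),(1:ℝ)) = L₂ ((1:ℝ),(0:ℝ)) := by
      simp only [hL₁, hL₂, ContinuousLinearMap.coe_comp', Function.comp_apply,
        ContinuousLinearMap.apply_apply]
      exact hsym0
    have hz0 : (gu * av - gv * au).re = 0 := by
      rw [hgu, hgv, aux_dec L₁ (au.re, au.im), aux_dec L₂ (au.re, au.im),
        aux_dec L₁ (av.re, av.im), aux_dec L₂ (av.re, av.im)]
      exact aux_re (L₁ (1,0)) (L₁ (0,1)) (L₂ (1,0)) (L₂ (0,1)) hd au av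
    rw [Complex.add_re, hz0, add_zero]
end

section
/- Define T : ℂ × ℝ² → ℂ² by T(c, t₁, t₂) = ( c·e^{−t₁ + i·t₂} , e^{t₁ − i·t₂} ), and let ω_can(u,v) = Re(u₁v₂ − v₁u₂) on ℂ². Then: (i) the first times the second component of T(c,t₁,t₂) equals c, i.e. T is a parametrization of the fibers of π(z₁,z₂) = z₁z₂; (ii) T pulls ω_can back to the standard form dc₁∧dt₁ + dc₂∧dt₂: for every point p = (c,t₁,t₂) and all tangent vectors u, v ∈ ℂ × ℝ² (written u = (u_{c₁}, u_{c₂}, u_{t₁}, u_{t₂})), one has ω_can(DT(p)u, DT(p)v) = u_{c₁}v_{t₁} − v_{c₁}u_{t₁} + u_{c₂}v_{t₂} − v_{c₂}u_{t₂}, where DT(p) denotes the real Fréchet derivative of T at p. -/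
/-!
With `z = t₁ - i t₂` the map is `T(c, t) = (c e^{-z}, e^{z})`. For any `g, f`, the map
`q ↦ (g q · e^{-f q}, e^{f q})` pulls `dz₁ ∧ dz₂` back to `dg ∧ df`, because the factors `e^{-f}` and
`e^{f}` cancel in the wedge and the term coming from differentiating `e^{-f}` is proportional to `df`.
Taking `g = c` and `f = z`, the real part of `dc ∧ (dt₁ - i dt₂)` is `dc₁ ∧ dt₁ + dc₂ ∧ dt₂`.
-/

open Complex ContinuousLinearMap

section Wedge

variable {𝕜 : Type*} [NontriviallyNormedField 𝕜] [NormedAlgebra 𝕜 ℂ]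
  {E : Type*} [NormedAddCommGroup E] [NormedSpace 𝕜 E]

theorem fderiv_mul_exp_neg_prod_exp_wedge {g f : E → ℂ} {p : E}
    (hg : DifferentiableAt 𝕜 g p) (hf : DifferentiableAt 𝕜 f p) (u v : E) :
    let D := fderiv 𝕜 (fun q => (g q * exp (-f q), exp (f q))) p
    (D u).1 * (D v).2 - (D v).1 * (D u).2
      = fderiv 𝕜 g p u * fderiv 𝕜 f p v - fderiv 𝕜 g p v * fderiv 𝕜 f p u := by
  have hD : HasFDerivAt (fun q => (g q * exp (-f q), exp (f q))) _ p :=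
    (hg.hasFDerivAt.mul hf.hasFDerivAt.neg.cexp).prodMk hf.hasFDerivAt.cexp
  have hexp : exp (-f p) * exp (f p) = 1 := by rw [← exp_add, neg_add_cancel, exp_zero]
  simp only [hD.fderiv, prod_apply, add_apply, smul_apply, neg_apply, smul_eq_mul]
  linear_combination (fderiv 𝕜 g p u * fderiv 𝕜 f p v - fderiv 𝕜 g p v * fderiv 𝕜 f p u) * hexp

end Wedge

noncomputable def flowTime : ℂ × ℝ × ℝ →L[ℝ] ℂ :=
  ofRealCLM.comp ((fst ℝ ℝ ℝ).comp (snd ℝ ℂ (ℝ × ℝ)))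
    - I • ofRealCLM.comp ((snd ℝ ℝ ℝ).comp (snd ℝ ℂ (ℝ × ℝ)))

theorem flowTime_apply (q : ℂ × ℝ × ℝ) : flowTime q = (q.2.1 : ℂ) - I * q.2.2 := by
  simp [flowTime]

theorem re_mul_flowTime (z : ℂ) (q : ℂ × ℝ × ℝ) :
    (z * flowTime q).re = z.re * q.2.1 + z.im * q.2.2 := by
  simp [flowTime_apply]

/-- the parametrization `T(c,t₁,t₂) = (c·e^{−t₁+it₂}, e^{t₁−it₂})` of the
regular fibers of `π(z₁,z₂) = z₁z₂` pulls `ω_can(u,v) = Re(u₁v₂ − v₁u₂)` back to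
`dc₁∧dt₁ + dc₂∧dt₂`. -/
theorem stmt3 (ω : ℂ × ℂ → ℂ × ℂ → ℝ)
    (hω : ∀ u v, ω u v = (u.1 * v.2 - v.1 * u.2).re)
    (T : ℂ × ℝ × ℝ → ℂ × ℂ)
    (hT : ∀ p : ℂ × ℝ × ℝ, T p =
      (p.1 * Complex.exp (-(p.2.1 : ℂ) + Complex.I * (p.2.2 : ℂ)),
       Complex.exp ((p.2.1 : ℂ) - Complex.I * (p.2.2 : ℂ)))) :
    -- (i) T parametrizes the fibers of π(z₁,z₂) = z₁z₂
    (∀ p : ℂ × ℝ × ℝ, (T p).1 * (T p).2 = p.1)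
    -- (ii) T*(ω_can) = dc₁∧dt₁ + dc₂∧dt₂
    ∧ (∀ p u v : ℂ × ℝ × ℝ,
        ω (fderiv ℝ T p u) (fderiv ℝ T p v)
          = u.1.re * v.2.1 - v.1.re * u.2.1 + u.1.im * v.2.2 - v.1.im * u.2.2) := by
  have hT' : T = fun q => (q.1 * exp (-flowTime q), exp (flowTime q)) := by
    funext q
    rw [hT, flowTime_apply, neg_sub', sub_neg_eq_add, add_comm (-(q.2.1 : ℂ))]
  refine ⟨fun p => ?_, fun p u v => ?_⟩
  · rw [hT', mul_assoc, ← exp_add, neg_add_cancel, exp_zero, mul_one]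
  · have hwedge := fderiv_mul_exp_neg_prod_exp_wedge differentiableAt_fst
      flowTime.differentiableAt (p := p) u v
    rw [fderiv_fst, flowTime.fderiv] at hwedge
    rw [hω, hT', hwedge, coe_fst', sub_re, re_mul_flowTime, re_mul_flowTime]
    ring
end

section
/- Let S : ℝ² → ℝ be smooth with partials S₁, S₂, and let U = {c ∈ ℂ : c ≠ 0, c ∉ (−∞,0]} with arg the principal argument. On the open set of points (c, t₁, t₂) ∈ U × ℝ² where S₁(c) − ln|c| ≠ 0, define the real functions z_m = (1/2π)·(−ln|c|·c₁ + arg(c)·c₂ + c₁ + S(c)), z_e = c₂, θ_e = 2π·t₁/(S₁(c) − ln|c|), θ_m = t₂ − (S₂(c) + arg(c))·t₁/(S₁(c) − ln|c|), where c = c₁ + i·c₂. Then dz_m∧dθ_e + dz_e∧dθ_m = dc₁∧dt₁ + dc₂∧dt₂: for every such point p and all tangent vectors u, v ∈ ℝ⁴ (components (u_{c₁}, u_{c₂}, u_{t₁}, u_{t₂})), Dz_m(p)(u)·Dθ_e(p)(v) − Dz_m(p)(v)·Dθ_e(p)(u) + Dz_e(p)(u)·Dθ_m(p)(v) − Dz_e(p)(v)·Dθ_m(p)(u)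 = u_{c₁}v_{t₁} − v_{c₁}u_{t₁} + u_{c₂}v_{t₂} − v_{c₂}u_{t₂}, where D denotes the Fréchet derivative. -/
set_option maxRecDepth 4000 in
set_option maxHeartbeats 1000000 in
open ContinuousLinearMap in
/-- Theorem 2.1: in the parametrizing coordinates `(c,t₁,t₂)` (with `c ≠ 0`
and `c` off the branch cut `(−∞,0]`, i.e. `c` in the slit plane, and `S₁(c) − ln|c| ≠ 0`),
the action-angle coordinates `z_m, z_e, θ_e, θ_m` satisfy
`dz_m∧dθ_e + dz_e∧dθ_m = dc₁∧dt₁ + dc₂∧dt₂`. -/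
theorem stmt4 (S : ℝ × ℝ → ℝ) (hS : ContDiff ℝ (⊤ : ℕ∞) S)
    (S₁ S₂ : ℝ × ℝ → ℝ)
    (hS₁ : ∀ p, S₁ p = fderiv ℝ S p (1, 0))
    (hS₂ : ∀ p, S₂ p = fderiv ℝ S p (0, 1))
    (zm ze θe θm : ℂ × ℝ × ℝ → ℝ)
    (hzm : ∀ p : ℂ × ℝ × ℝ, zm p =
      (1 / (2 * Real.pi)) * (-(Real.log ‖p.1‖) * p.1.re
        + Complex.arg p.1 * p.1.im + p.1.re + S (p.1.re, p.1.im)))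
    (hze : ∀ p : ℂ × ℝ × ℝ, ze p = p.1.im)
    (hθe : ∀ p : ℂ × ℝ × ℝ, θe p =
      2 * Real.pi * p.2.1 / (S₁ (p.1.re, p.1.im) - Real.log ‖p.1‖))
    (hθm : ∀ p : ℂ × ℝ × ℝ, θm p =
      p.2.2 - (S₂ (p.1.re, p.1.im) + Complex.arg p.1) * p.2.1
        / (S₁ (p.1.re, p.1.im) - Real.log ‖p.1‖)) :
    ∀ p : ℂ × ℝ × ℝ, p.1 ≠ 0 → p.1 ∈ Complex.slitPlane →
      S₁ (p.1.re, p.1.im) - Real.log ‖p.1‖ ≠ 0 →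
      ∀ u v : ℂ × ℝ × ℝ,
        fderiv ℝ zm p u * fderiv ℝ θe p v - fderiv ℝ zm p v * fderiv ℝ θe p u
          + fderiv ℝ ze p u * fderiv ℝ θm p v - fderiv ℝ ze p v * fderiv ℝ θm p u
        = u.1.re * v.2.1 - v.1.re * u.2.1 + u.1.im * v.2.2 - v.1.im * u.2.2 := by
  intro p hc0 hslit hD u v
  have hρ : Complex.normSq p.1 ≠ 0 := by
    simpa [Complex.normSq_eq_zero] using hc0
  have hρ' : p.1.re * p.1.re + p.1.im * p.1.im ≠ 0 := by
    simpa [Complex.normSq_apply] using hρ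
  -- basic coordinate derivatives
  have hfst : HasFDerivAt (fun q : ℂ × ℝ × ℝ => q.1) (fst ℝ ℂ (ℝ × ℝ)) p := hasFDerivAt_fst
  have hre : HasFDerivAt (fun q : ℂ × ℝ × ℝ => q.1.re) (Complex.reCLM.comp (fst ℝ ℂ (ℝ × ℝ))) p :=
    Complex.reCLM.hasFDerivAt.comp p hfst
  have him : HasFDerivAt (fun q : ℂ × ℝ × ℝ => q.1.im) (Complex.imCLM.comp (fst ℝ ℂ (ℝ × ℝ))) p :=
    Complex.imCLM.hasFDerivAt.comp p hfst
  have ht1 : HasFDerivAt (fun q : ℂ × ℝ × ℝ => q.2.1) ((fst ℝ ℝ ℝ).comp (snd ℝ ℂ (ℝ × ℝ))) p :=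
    hasFDerivAt_fst.comp p hasFDerivAt_snd
  have ht2 : HasFDerivAt (fun q : ℂ × ℝ × ℝ => q.2.2) ((snd ℝ ℝ ℝ).comp (snd ℝ ℂ (ℝ × ℝ))) p :=
    hasFDerivAt_snd.comp p hasFDerivAt_snd
  -- derivatives of log |c| and arg c
  have hlog : HasFDerivAt (fun q : ℂ × ℝ × ℝ => Complex.log q.1)
      ((((1 : ℂ →L[ℂ] ℂ).smulRight (p.1)⁻¹).restrictScalars ℝ).comp (fst ℝ ℂ (ℝ × ℝ))) p :=
    (((Complex.hasDerivAt_log hslit).hasFDerivAt).restrictScalars ℝ).comp p hfst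
  have habs : HasFDerivAt (fun q : ℂ × ℝ × ℝ => Real.log ‖q.1‖)
      (Complex.reCLM.comp ((((1 : ℂ →L[ℂ] ℂ).smulRight (p.1)⁻¹).restrictScalars ℝ).comp
        (fst ℝ ℂ (ℝ × ℝ)))) p := by
    have h := Complex.reCLM.hasFDerivAt.comp p hlog
    simpa [Function.comp_def, Complex.log_re] using h
  have harg : HasFDerivAt (fun q : ℂ × ℝ × ℝ => Complex.arg q.1)
      (Complex.imCLM.comp ((((1 : ℂ →L[ℂ] ℂ).smulRight (p.1)⁻¹).restrictScalars ℝ).comp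
        (fst ℝ ℂ (ℝ × ℝ)))) p := by
    have h := Complex.imCLM.hasFDerivAt.comp p hlog
    simpa [Function.comp_def, Complex.log_im] using h
  -- derivatives involving S
  have hΦ := hre.prodMk him
  have hSd : Differentiable ℝ S := hS.differentiable (by simp)
  have hS'd : Differentiable ℝ (fderiv ℝ S) := (hS.fderiv_right (m := 1) (WithTop.coe_le_coe.mpr le_top)).differentiable (by simp)
  have hsS : HasFDerivAt (fun q : ℂ × ℝ × ℝ => S (q.1.re, q.1.im))
      ((fderiv ℝ S (p.1.re, p.1.im)).comp
        ((Complex.reCLM.comp (fst ℝ ℂ (ℝ × ℝ))).prod (Complex.imCLM.comp (fst ℝ ℂ (ℝ × ℝ))))) p :=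
    (hSd (p.1.re, p.1.im)).hasFDerivAt.comp p hΦ
  have hsS' : HasFDerivAt (fun q : ℂ × ℝ × ℝ => fderiv ℝ S (q.1.re, q.1.im))
      ((fderiv ℝ (fderiv ℝ S) (p.1.re, p.1.im)).comp
        ((Complex.reCLM.comp (fst ℝ ℂ (ℝ × ℝ))).prod (Complex.imCLM.comp (fst ℝ ℂ (ℝ × ℝ))))) p :=
    (hS'd (p.1.re, p.1.im)).hasFDerivAt.comp p hΦ
  have hs1 : HasFDerivAt (fun q : ℂ × ℝ × ℝ => S₁ (q.1.re, q.1.im))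
      ((ContinuousLinearMap.apply ℝ ℝ (((1:ℝ), (0:ℝ)) : ℝ × ℝ)).comp
        ((fderiv ℝ (fderiv ℝ S) (p.1.re, p.1.im)).comp
          ((Complex.reCLM.comp (fst ℝ ℂ (ℝ × ℝ))).prod (Complex.imCLM.comp (fst ℝ ℂ (ℝ × ℝ)))))) p := by
    have h := (ContinuousLinearMap.apply ℝ ℝ (((1:ℝ), (0:ℝ)) : ℝ × ℝ)).hasFDerivAt.comp p hsS'
    simp only [Function.comp_def, ContinuousLinearMap.apply_apply] at h
    simp only [← hS₁] at h
    exact h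
  have hs2 : HasFDerivAt (fun q : ℂ × ℝ × ℝ => S₂ (q.1.re, q.1.im))
      ((ContinuousLinearMap.apply ℝ ℝ (((0:ℝ), (1:ℝ)) : ℝ × ℝ)).comp
        ((fderiv ℝ (fderiv ℝ S) (p.1.re, p.1.im)).comp
          ((Complex.reCLM.comp (fst ℝ ℂ (ℝ × ℝ))).prod (Complex.imCLM.comp (fst ℝ ℂ (ℝ × ℝ)))))) p := by
    have h := (ContinuousLinearMap.apply ℝ ℝ (((0:ℝ), (1:ℝ)) : ℝ × ℝ)).hasFDerivAt.comp p hsS'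
    simp only [Function.comp_def, ContinuousLinearMap.apply_apply] at h
    simp only [← hS₂] at h
    exact h
  -- evaluation lemmas
  have hev1 : ∀ x y : ℝ, fderiv ℝ S (p.1.re, p.1.im) (x, y)
      = x * S₁ (p.1.re, p.1.im) + y * S₂ (p.1.re, p.1.im) := by
    intro x y
    have hx : ((x, y) : ℝ × ℝ) = x • ((1:ℝ), (0:ℝ)) + y • ((0:ℝ), (1:ℝ)) := by
      simp [Prod.ext_iff]
    rw [hx, map_add, map_smul, map_smul, hS₁, hS₂, smul_eq_mul, smul_eq_mul]
  have hev2 : ∀ (x y : ℝ) (w : ℝ × ℝ), fderiv ℝ (fderiv ℝ S) (p.1.re, p.1.im) (x, y) w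
      = x * fderiv ℝ (fderiv ℝ S) (p.1.re, p.1.im) (1, 0) w
        + y * fderiv ℝ (fderiv ℝ S) (p.1.re, p.1.im) (0, 1) w := by
    intro x y w
    have hx : ((x, y) : ℝ × ℝ) = x • ((1:ℝ), (0:ℝ)) + y • ((0:ℝ), (1:ℝ)) := by
      simp [Prod.ext_iff]
    rw [hx, map_add, map_smul, map_smul]
    simp
  have hsym : fderiv ℝ (fderiv ℝ S) (p.1.re, p.1.im) (1, 0) (0, 1)
      = fderiv ℝ (fderiv ℝ S) (p.1.re, p.1.im) (0, 1) (1, 0) :=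
    second_derivative_symmetric (fun y => (hSd y).hasFDerivAt)
      ((hS'd (p.1.re, p.1.im)).hasFDerivAt) _ _
  -- the four functions
  have Hzm := (((((habs.neg.mul hre).add (harg.mul him)).add hre).add hsS).const_mul
      (1 / (2 * Real.pi))).congr_of_eventuallyEq (Filter.Eventually.of_forall fun q => hzm q)
  have Hze := him.congr_of_eventuallyEq (Filter.Eventually.of_forall fun q => hze q)
  have hinv := (hasFDerivAt_inv' (𝕜 := ℝ) hD).comp p (hs1.sub habs)
  have heθe : θe =ᶠ[nhds p] fun q : ℂ × ℝ × ℝ =>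
      2 * Real.pi * q.2.1 * (S₁ (q.1.re, q.1.im) - Real.log ‖q.1‖)⁻¹ :=
    Filter.Eventually.of_forall fun q => by rw [hθe, div_eq_mul_inv]
  have heθm : θm =ᶠ[nhds p] fun q : ℂ × ℝ × ℝ =>
      q.2.2 - (S₂ (q.1.re, q.1.im) + Complex.arg q.1) * q.2.1
        * (S₁ (q.1.re, q.1.im) - Real.log ‖q.1‖)⁻¹ :=
    Filter.Eventually.of_forall fun q => by rw [hθm, div_eq_mul_inv]
  have Hθe := ((ht1.const_mul (2 * Real.pi)).mul hinv).congr_of_eventuallyEq heθe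
  have Hθm := (ht2.sub (((hs2.add harg).mul ht1).mul hinv)).congr_of_eventuallyEq heθm
  have ezm : ∀ w : ℂ × ℝ × ℝ, fderiv ℝ zm p w
      = (1 / (2 * Real.pi)) * ((S₁ (p.1.re, p.1.im) - Real.log ‖p.1‖) * w.1.re + (S₂ (p.1.re, p.1.im) + Complex.arg p.1) * w.1.im) := by
    intro w
    rw [Hzm.fderiv]
    simp only [ContinuousLinearMap.coe_comp', Function.comp_apply, ContinuousLinearMap.add_apply,
      ContinuousLinearMap.coe_sub', Pi.sub_apply, ContinuousLinearMap.coe_smul', Pi.smul_apply,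
      smul_eq_mul, ContinuousLinearMap.smulRight_apply, ContinuousLinearMap.one_apply,
      ContinuousLinearMap.coe_restrictScalars', ContinuousLinearMap.coe_fst',
      ContinuousLinearMap.coe_snd', Complex.reCLM_apply, Complex.imCLM_apply,
      ContinuousLinearMap.prod_apply, ContinuousLinearMap.apply_apply,
      ContinuousLinearMap.neg_apply, ContinuousLinearMap.mulLeftRight_apply, Pi.neg_apply,
      ContinuousLinearMap.coe_neg', hev1, Complex.mul_re, Complex.mul_im,
      Complex.inv_re, Complex.inv_im, Complex.normSq_apply]
    field_simp [show p.1.re ^ 2 + p.1.im ^ 2 ≠ 0 by rwa [sq, sq]]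
    ring
  have eze : ∀ w : ℂ × ℝ × ℝ, fderiv ℝ ze p w = w.1.im := by
    intro w
    rw [Hze.fderiv]
    simp only [ContinuousLinearMap.coe_comp', Function.comp_apply, ContinuousLinearMap.add_apply,
      ContinuousLinearMap.coe_sub', Pi.sub_apply, ContinuousLinearMap.coe_smul', Pi.smul_apply,
      smul_eq_mul, ContinuousLinearMap.smulRight_apply, ContinuousLinearMap.one_apply,
      ContinuousLinearMap.coe_restrictScalars', ContinuousLinearMap.coe_fst',
      ContinuousLinearMap.coe_snd', Complex.reCLM_apply, Complex.imCLM_apply,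
      ContinuousLinearMap.prod_apply, ContinuousLinearMap.apply_apply,
      ContinuousLinearMap.neg_apply, ContinuousLinearMap.mulLeftRight_apply, Pi.neg_apply,
      ContinuousLinearMap.coe_neg', hev1, Complex.mul_re, Complex.mul_im,
      Complex.inv_re, Complex.inv_im, Complex.normSq_apply]
  have eθe : ∀ w : ℂ × ℝ × ℝ, fderiv ℝ θe p w
      = 2 * Real.pi * w.2.1 / (S₁ (p.1.re, p.1.im) - Real.log ‖p.1‖) - 2 * Real.pi * p.2.1 * (w.1.re * (fderiv ℝ (fderiv ℝ S) (p.1.re, p.1.im) (1, 0) (1, 0)) + w.1.im * (fderiv ℝ (fderiv ℝ S) (p.1.re, p.1.im) (0, 1) (1, 0)) - (w.1.re * p.1.re + w.1.im * p.1.im) / (p.1.re * p.1.re + p.1.im * p.1.im)) / (S₁ (p.1.re, p.1.im) - Real.log ‖p.1‖) ^ 2 := by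
    intro w
    rw [Hθe.fderiv]
    simp only [hev2 w.1.re w.1.im ((1:ℝ), (0:ℝ)), ContinuousLinearMap.coe_comp', Function.comp_apply, ContinuousLinearMap.add_apply,
      ContinuousLinearMap.coe_sub', Pi.sub_apply, ContinuousLinearMap.coe_smul', Pi.smul_apply,
      smul_eq_mul, ContinuousLinearMap.smulRight_apply, ContinuousLinearMap.one_apply,
      ContinuousLinearMap.coe_restrictScalars', ContinuousLinearMap.coe_fst',
      ContinuousLinearMap.coe_snd', Complex.reCLM_apply, Complex.imCLM_apply,
      ContinuousLinearMap.prod_apply, ContinuousLinearMap.apply_apply,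
      ContinuousLinearMap.neg_apply, ContinuousLinearMap.mulLeftRight_apply, Pi.neg_apply,
      ContinuousLinearMap.coe_neg', hev1, Complex.mul_re, Complex.mul_im,
      Complex.inv_re, Complex.inv_im, Complex.normSq_apply]
    field_simp [show p.1.re ^ 2 + p.1.im ^ 2 ≠ 0 by rwa [sq, sq]]
    ring
  have eθm : ∀ w : ℂ × ℝ × ℝ, fderiv ℝ θm p w
      = w.2.2 - ((w.1.re * (fderiv ℝ (fderiv ℝ S) (p.1.re, p.1.im) (1, 0) (0, 1)) + w.1.im * (fderiv ℝ (fderiv ℝ S) (p.1.re, p.1.im) (0, 1) (0, 1)) + (w.1.im * p.1.re - w.1.re * p.1.im) / (p.1.re * p.1.re + p.1.im * p.1.im)) * p.2.1 + (S₂ (p.1.re, p.1.im) + Complex.arg p.1) * w.2.1) / (S₁ (p.1.re, p.1.im) - Real.log ‖p.1‖) + (S₂ (p.1.re, p.1.im) + Complex.arg p.1) * p.2.1 * (w.1.re * (fderiv ℝ (fderiv ℝ S) (p.1.re, p.1.im) (1, 0) (1, 0)) + w.1.im * (fderiv ℝ (fderiv ℝ S) (p.1.re, p.1.im) (0, 1)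 (1, 0)) - (w.1.re * p.1.re + w.1.im * p.1.im) / (p.1.re * p.1.re + p.1.im * p.1.im)) / (S₁ (p.1.re, p.1.im) - Real.log ‖p.1‖) ^ 2 := by
    intro w
    rw [Hθm.fderiv]
    simp only [hev2 w.1.re w.1.im ((1:ℝ), (0:ℝ)), hev2 w.1.re w.1.im ((0:ℝ), (1:ℝ)), Pi.add_apply, Pi.mul_apply, ContinuousLinearMap.coe_comp', Function.comp_apply, ContinuousLinearMap.add_apply,
      ContinuousLinearMap.coe_sub', Pi.sub_apply, ContinuousLinearMap.coe_smul', Pi.smul_apply,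
      smul_eq_mul, ContinuousLinearMap.smulRight_apply, ContinuousLinearMap.one_apply,
      ContinuousLinearMap.coe_restrictScalars', ContinuousLinearMap.coe_fst',
      ContinuousLinearMap.coe_snd', Complex.reCLM_apply, Complex.imCLM_apply,
      ContinuousLinearMap.prod_apply, ContinuousLinearMap.apply_apply,
      ContinuousLinearMap.neg_apply, ContinuousLinearMap.mulLeftRight_apply, Pi.neg_apply,
      ContinuousLinearMap.coe_neg', hev1, Complex.mul_re, Complex.mul_im,
      Complex.inv_re, Complex.inv_im, Complex.normSq_apply]
    field_simp [show p.1.re ^ 2 + p.1.im ^ 2 ≠ 0 by rwa [sq, sq]]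
    ring
  rw [ezm u, ezm v, eze u, eze v, eθe u, eθe v, eθm u, eθm v, hsym]
  field_simp
  ring
end

section
/- Let U ⊆ ℂ ∖ ((−∞,0] ∪ {0}) be open and F : U → ℂ holomorphic. Define Z_m(c) = (1/2π)·(c − c·log c + F(c)) (principal branch of log) and Z_e(c) = −i·c. Then for every c ∈ U and all u, v ∈ ℂ (writing u = u₁ + i·u₂, v = v₁ + i·v₂), Re[ Z_m′(c)·u · conj(Z_e′(c)·v) − Z_m′(c)·v · conj(Z_e′(c)·u) ] = (1/π)·( Re F′(c) − ln|c| )·( u₁v₂ − u₂v₁ ). Equivalently, Re(dZ_m ∧ dZ̄_e) = (1/π)(Re F′ − ln|c|)·dc₁∧dc₂. -/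
/-!
Both central charges are holomorphic, so `dZ_m ∧ dZ̄_e` only sees their derivatives
`Z_m′ = (F′ − log c)/2π` and `Z_e′ = −i`. For complex numbers `a, b`, the form
`(u, v) ↦ Re(a u · conj(b v) − a v · conj(b u))` equals `2 Im(a b̄)(u₁v₂ − u₂v₁)`,
and `Im((F′ − log c)/2π · i) = (Re F′ − ln|c|)/2π`.
-/

open Complex ComplexConjugate

theorem Complex.re_mul_conj_sub_mul_conj (a b u v : ℂ) :
    (a * u * conj (b * v) - a * v * conj (b * u)).re
      = 2 * (a * conj b).im * (u.re * v.im - u.im * v.re) := by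
  simp only [sub_re, mul_re, mul_im, map_mul, conj_re, conj_im]
  ring

theorem Complex.hasDerivAt_id_sub_mul_log {c : ℂ} (hc : c ∈ slitPlane) :
    HasDerivAt (fun z => z - z * log z) (-log c) c := by
  refine ((hasDerivAt_id' c).sub ((hasDerivAt_id' c).mul (hasDerivAt_log hc))).congr_deriv ?_
  rw [mul_inv_cancel₀ (slitPlane_ne_zero hc)]
  ring

/-- for the central charges `Z_m(c) = (1/2π)(c − c·log c + F(c))`,
`Z_e(c) = −i·c` with `F` holomorphic on an open set `U` contained in the slit plane
`ℂ ∖ ((−∞,0] ∪ {0})`, one has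
`Re(dZ_m ∧ dZ̄_e) = (1/π)(Re F′ − ln|c|)·dc₁∧dc₂` on `U`. -/
theorem stmt6 (U : Set ℂ) (hU : IsOpen U) (hUs : U ⊆ Complex.slitPlane)
    (F : ℂ → ℂ) (hF : DifferentiableOn ℂ F U)
    (Zm Ze : ℂ → ℂ)
    (hZm : ∀ c : ℂ, Zm c = ((1 / (2 * Real.pi) : ℝ) : ℂ) * (c - c * Complex.log c + F c))
    (hZe : ∀ c : ℂ, Ze c = -Complex.I * c) :
    ∀ c ∈ U, ∀ u v : ℂ,
      (deriv Zm c * u * (starRingEnd ℂ) (deriv Ze c * v)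
        - deriv Zm c * v * (starRingEnd ℂ) (deriv Ze c * u)).re
      = (1 / Real.pi) * ((deriv F c).re - Real.log ‖c‖)
          * (u.re * v.im - u.im * v.re) := by
  intro c hcU u v
  have hF' : HasDerivAt F (deriv F c) c :=
    (hF.differentiableAt (hU.mem_nhds hcU)).hasDerivAt
  have hZm' : deriv Zm c = ((1 / (2 * Real.pi) : ℝ) : ℂ) * (deriv F c - log c) := by
    have h : HasDerivAt Zm (((1 / (2 * Real.pi) : ℝ) : ℂ) * (-log c + deriv F c)) c := by
      rw [funext hZm]
      exact ((hasDerivAt_id_sub_mul_log (hUs hcU)).add hF').const_mul _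
    rw [h.deriv]
    ring
  have hZe' : deriv Ze c = -I := by
    rw [funext hZe, deriv_const_mul_field, deriv_id'', mul_one]
  rw [re_mul_conj_sub_mul_conj, hZm', hZe', ← log_re]
  simp only [map_neg, conj_I, neg_neg, mul_im, mul_re, ofReal_re, ofReal_im, sub_re, sub_im,
    I_re, I_im]
  field_simp
  ring
end

section
/- Let U ⊆ ℂ ∖ ((−∞,0] ∪ {0}) be open, F : U → ℂ holomorphic, R > 0, and set Z_m(c) = (1/2π)(c − c·log c + F(c)), Z_e(c) = −i·c. On the tangent space ℂ × ℝ × ℝ (vectors w = (w_c, w_m, w_e)) at a point with base coordinate c ∈ U, define the ℂ-valued 2-form Ω(u,v) = [Z_m′(c)u_c·v_e − Z_m′(c)v_c·u_e] + [Z_e′(c)u_c·v_m − Z_e′(c)v_c·u_m] and the real 2-form ω(u,v) = πR·Re[ Z_m′(c)u_c·conj(Z_e′(c)v_c) − Z_m′(c)v_c·conj(Z_e′(c)u_c) ] + (1/2πR)·(u_m v_e − v_m u_e). With the wedge product of two 2-forms defined by (α∧β)(v₁,v₂,v₃,v₄) = α(v₁,v₂)β(v₃,v₄) − α(v₁,v₃)β(v₂,v₄)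 + α(v₁,v₄)β(v₂,v₃) + β(v₁,v₂)α(v₃,v₄) − β(v₁,v₃)α(v₂,v₄) + β(v₁,v₄)α(v₂,v₃), the following hold at every point: ω∧Ω = 0, ω∧Ω̄ = 0 (Ω̄ the pointwise complex conjugate of Ω), and ω∧ω = (1/2)·Ω∧Ω̄. -/
/-!
In the complex coframe `(dc, dc̄, dθ_m, dθ_e)` the three forms have constant coefficients:
with `a = Z_m'(c)`, `b = Z_e'(c)`,
`Ω = a dc∧dθ_e + b dc∧dθ_m`, `Ω̄ = ā dc̄∧dθ_e + b̄ dc̄∧dθ_m` and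
`ω = (πR/2)(a b̄ - ā b) dc∧dc̄ + (2πR)⁻¹ dθ_m∧dθ_e`.
On a four-dimensional space the wedge of two 2-forms is the polarised Pfaffian of their
coefficients times the volume form. The coefficients of `ω` and of `Ω`, `Ω̄` share no
complementary pair of indices, so `ω∧Ω = ω∧Ω̄ = 0`, while `ω∧ω` and `Ω∧Ω̄` are
`(a b̄ - ā b)/2` and `a b̄ - ā b` times the volume form.
-/

open ComplexConjugate

/-- The wedge product of two 2-forms (as `ℂ`-valued bi-linear expressions),
evaluated on four vectors. -/
noncomputable def wedge2 {V : Type*} (α β : V → V → ℂ) : V → V → V → V → ℂ :=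
  fun v₁ v₂ v₃ v₄ =>
    α v₁ v₂ * β v₃ v₄ - α v₁ v₃ * β v₂ v₄ + α v₁ v₄ * β v₂ v₃
      + β v₁ v₂ * α v₃ v₄ - β v₁ v₃ * α v₂ v₄ + β v₁ v₄ * α v₂ v₃

section Coframe

variable {V : Type*}

/-- The 2-form `∑_{i<j} p i j • xᵢ ∧ xⱼ`; the entries of `p` on and below the diagonal are
ignored. -/
def twoForm (x : Fin 4 → V → ℂ) (p : Matrix (Fin 4) (Fin 4) ℂ) (u v : V) : ℂ :=
  ∑ i, ∑ j, if i < j then p i j * (x i u * x j v - x i v * x j u) else 0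

/-- The polarisation of the Pfaffian of a `4 × 4` alternating matrix. -/
def pfaffianPairing (p q : Matrix (Fin 4) (Fin 4) ℂ) : ℂ :=
  p 0 1 * q 2 3 - p 0 2 * q 1 3 + p 0 3 * q 1 2 + p 1 2 * q 0 3 - p 1 3 * q 0 2 + p 2 3 * q 0 1

theorem wedge2_twoForm (x : Fin 4 → V → ℂ) (p q : Matrix (Fin 4) (Fin 4) ℂ) (v₁ v₂ v₃ v₄ : V) :
    wedge2 (twoForm x p) (twoForm x q) v₁ v₂ v₃ v₄
      = pfaffianPairing p q * (Matrix.of fun i j => x i (![v₁, v₂, v₃, v₄] j)).det := by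
  simp [Matrix.det_succ_row_zero, Fin.sum_univ_succ, Fin.succAbove, wedge2, twoForm,
    pfaffianPairing]
  ring

end Coframe

section SemiFlat

variable (a b : ℂ) (R : ℝ)

/-- The coframe `(dc, dc̄, dθ_m, dθ_e)` on `ℂ × ℝ × ℝ`. -/
def complexCoframe : Fin 4 → ℂ × ℝ × ℝ → ℂ :=
  ![fun u => u.1, fun u => conj u.1, fun u => u.2.1, fun u => u.2.2]

def holomorphicFormCoeff : Matrix (Fin 4) (Fin 4) ℂ :=
  !![0, 0, b, a; 0, 0, 0, 0; 0, 0, 0, 0; 0, 0, 0, 0]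

def conjHolomorphicFormCoeff : Matrix (Fin 4) (Fin 4) ℂ :=
  !![0, 0, 0, 0; 0, 0, conj b, conj a; 0, 0, 0, 0; 0, 0, 0, 0]

noncomputable def semiFlatFormCoeff : Matrix (Fin 4) (Fin 4) ℂ :=
  !![0, Real.pi * R / 2 * (a * conj b - conj a * b), 0, 0; 0, 0, 0, 0;
    0, 0, 0, 1 / (2 * Real.pi * R); 0, 0, 0, 0]

theorem holomorphicForm_eq_twoForm (Ω : ℂ × ℝ × ℝ → ℂ × ℝ × ℝ → ℂ)
    (hΩ : ∀ u v : ℂ × ℝ × ℝ, Ω u v =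
      (a * u.1 * (v.2.2 : ℂ) - a * v.1 * (u.2.2 : ℂ))
        + (b * u.1 * (v.2.1 : ℂ) - b * v.1 * (u.2.1 : ℂ))) :
    Ω = twoForm complexCoframe (holomorphicFormCoeff a b) := by
  ext u v
  simp [hΩ, twoForm, complexCoframe, holomorphicFormCoeff, Fin.sum_univ_four]
  ring

theorem conj_holomorphicForm_eq_twoForm (Ω : ℂ × ℝ × ℝ → ℂ × ℝ × ℝ → ℂ)
    (hΩ : ∀ u v : ℂ × ℝ × ℝ, Ω u v =
      (a * u.1 * (v.2.2 : ℂ) - a * v.1 * (u.2.2 : ℂ))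
        + (b * u.1 * (v.2.1 : ℂ) - b * v.1 * (u.2.1 : ℂ))) :
    (fun u v => conj (Ω u v)) = twoForm complexCoframe (conjHolomorphicFormCoeff a b) := by
  ext u v
  simp [hΩ, twoForm, complexCoframe, conjHolomorphicFormCoeff, Fin.sum_univ_four]
  ring

theorem semiFlatForm_eq_twoForm (ω : ℂ × ℝ × ℝ → ℂ × ℝ × ℝ → ℝ)
    (hω : ∀ u v : ℂ × ℝ × ℝ, ω u v =
      Real.pi * R * (a * u.1 * conj (b * v.1) - a * v.1 * conj (b * u.1)).re
        + (1 / (2 * Real.pi * R)) * (u.2.1 * v.2.2 - v.2.1 * u.2.2)) :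
    (fun u v => (ω u v : ℂ)) = twoForm complexCoframe (semiFlatFormCoeff a b R) := by
  ext u v
  rw [hω]
  push_cast
  rw [Complex.re_eq_add_conj]
  simp [twoForm, complexCoframe, semiFlatFormCoeff, Fin.sum_univ_four]
  ring

theorem pfaffianPairing_semiFlatFormCoeff_holomorphicFormCoeff :
    pfaffianPairing (semiFlatFormCoeff a b R) (holomorphicFormCoeff a b) = 0 := by
  simp [pfaffianPairing, semiFlatFormCoeff, holomorphicFormCoeff]

theorem pfaffianPairing_semiFlatFormCoeff_conjHolomorphicFormCoeff :
    pfaffianPairing (semiFlatFormCoeff a b R) (conjHolomorphicFormCoeff a b) = 0 := by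
  simp [pfaffianPairing, semiFlatFormCoeff, conjHolomorphicFormCoeff]

theorem pfaffianPairing_semiFlatFormCoeff_self (hR : R ≠ 0) :
    pfaffianPairing (semiFlatFormCoeff a b R) (semiFlatFormCoeff a b R)
      = 1 / 2 * pfaffianPairing (holomorphicFormCoeff a b) (conjHolomorphicFormCoeff a b) := by
  have hπ : (Real.pi : ℂ) ≠ 0 := by exact_mod_cast Real.pi_ne_zero
  have hR' : (R : ℂ) ≠ 0 := by exact_mod_cast hR
  simp [pfaffianPairing, semiFlatFormCoeff, holomorphicFormCoeff, conjHolomorphicFormCoeff]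
  field_simp
  ring

end SemiFlat

theorem stmt7_general (R : ℝ) (hR : 0 < R)
    (Zm Ze : ℂ → ℂ)
    (c : ℂ)
    (Ω : ℂ × ℝ × ℝ → ℂ × ℝ × ℝ → ℂ)
    (hΩ : ∀ u v : ℂ × ℝ × ℝ, Ω u v =
      (deriv Zm c * u.1 * (v.2.2 : ℂ) - deriv Zm c * v.1 * (u.2.2 : ℂ))
        + (deriv Ze c * u.1 * (v.2.1 : ℂ) - deriv Ze c * v.1 * (u.2.1 : ℂ)))
    (ω : ℂ × ℝ × ℝ → ℂ × ℝ × ℝ → ℝ)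
    (hω : ∀ u v : ℂ × ℝ × ℝ, ω u v =
      Real.pi * R * (deriv Zm c * u.1 * (starRingEnd ℂ) (deriv Ze c * v.1)
        - deriv Zm c * v.1 * (starRingEnd ℂ) (deriv Ze c * u.1)).re
        + (1 / (2 * Real.pi * R)) * (u.2.1 * v.2.2 - v.2.1 * u.2.2)) :
    (∀ v₁ v₂ v₃ v₄ : ℂ × ℝ × ℝ,
        wedge2 (fun u v => (ω u v : ℂ)) Ω v₁ v₂ v₃ v₄ = 0)
    ∧ (∀ v₁ v₂ v₃ v₄ : ℂ × ℝ × ℝ,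
        wedge2 (fun u v => (ω u v : ℂ)) (fun u v => (starRingEnd ℂ) (Ω u v)) v₁ v₂ v₃ v₄ = 0)
    ∧ (∀ v₁ v₂ v₃ v₄ : ℂ × ℝ × ℝ,
        wedge2 (fun u v => (ω u v : ℂ)) (fun u v => (ω u v : ℂ)) v₁ v₂ v₃ v₄
          = (1 / 2) * wedge2 Ω (fun u v => (starRingEnd ℂ) (Ω u v)) v₁ v₂ v₃ v₄) := by
  rw [semiFlatForm_eq_twoForm _ _ R ω hω, conj_holomorphicForm_eq_twoForm _ _ Ω hΩ,
    holomorphicForm_eq_twoForm _ _ Ω hΩ]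
  refine ⟨fun v₁ v₂ v₃ v₄ => ?_, fun v₁ v₂ v₃ v₄ => ?_, fun v₁ v₂ v₃ v₄ => ?_⟩
  · rw [wedge2_twoForm, pfaffianPairing_semiFlatFormCoeff_holomorphicFormCoeff, zero_mul]
  · rw [wedge2_twoForm, pfaffianPairing_semiFlatFormCoeff_conjHolomorphicFormCoeff, zero_mul]
  · rw [wedge2_twoForm, wedge2_twoForm, pfaffianPairing_semiFlatFormCoeff_self _ _ _ hR.ne',
      mul_assoc]

/-- Lemma 5.2: with `Ω = dZ_m∧dθ_e + dZ_e∧dθ_m` and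
`ω = πR·Re(dZ_m∧dZ̄_e) + (1/2πR)dθ_m∧dθ_e` at a point `c ∈ U`, one has
`ω∧Ω = 0`, `ω∧Ω̄ = 0`, and `ω∧ω = (1/2)·Ω∧Ω̄`. -/
theorem stmt7 (U : Set ℂ) (hU : IsOpen U) (hUs : U ⊆ Complex.slitPlane)
    (F : ℂ → ℂ) (hF : DifferentiableOn ℂ F U) (R : ℝ) (hR : 0 < R)
    (Zm Ze : ℂ → ℂ)
    (hZm : ∀ c : ℂ, Zm c = ((1 / (2 * Real.pi) : ℝ) : ℂ) * (c - c * Complex.log c + F c))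
    (hZe : ∀ c : ℂ, Ze c = -Complex.I * c)
    (c : ℂ) (hc : c ∈ U)
    (Ω : ℂ × ℝ × ℝ → ℂ × ℝ × ℝ → ℂ)
    (hΩ : ∀ u v : ℂ × ℝ × ℝ, Ω u v =
      (deriv Zm c * u.1 * (v.2.2 : ℂ) - deriv Zm c * v.1 * (u.2.2 : ℂ))
        + (deriv Ze c * u.1 * (v.2.1 : ℂ) - deriv Ze c * v.1 * (u.2.1 : ℂ)))
    (ω : ℂ × ℝ × ℝ → ℂ × ℝ × ℝ → ℝ)
    (hω : ∀ u v : ℂ × ℝ × ℝ, ω u v =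
      Real.pi * R * (deriv Zm c * u.1 * (starRingEnd ℂ) (deriv Ze c * v.1)
        - deriv Zm c * v.1 * (starRingEnd ℂ) (deriv Ze c * u.1)).re
        + (1 / (2 * Real.pi * R)) * (u.2.1 * v.2.2 - v.2.1 * u.2.2)) :
    (∀ v₁ v₂ v₃ v₄ : ℂ × ℝ × ℝ,
        wedge2 (fun u v => (ω u v : ℂ)) Ω v₁ v₂ v₃ v₄ = 0)
    ∧ (∀ v₁ v₂ v₃ v₄ : ℂ × ℝ × ℝ,
        wedge2 (fun u v => (ω u v : ℂ)) (fun u v => (starRingEnd ℂ) (Ω u v)) v₁ v₂ v₃ v₄ = 0)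
    ∧ (∀ v₁ v₂ v₃ v₄ : ℂ × ℝ × ℝ,
        wedge2 (fun u v => (ω u v : ℂ)) (fun u v => (ω u v : ℂ)) v₁ v₂ v₃ v₄
          = (1 / 2) * wedge2 Ω (fun u v => (starRingEnd ℂ) (Ω u v)) v₁ v₂ v₃ v₄) :=
  stmt7_general R hR Zm Ze c Ω hΩ ω hω
end

section
/- Let S : ℝ² → ℝ be smooth with partials S₁, S₂, let R > 0, and let U = {c ∈ ℂ : c ≠ 0, c ∉ (−∞,0]} with arg the principal argument and log the principal logarithm. On U × ℝ² with coordinates (c, θ_m, θ_e), c = c₁ + i·c₂, and tangent vectors u = (u_{c₁}, u_{c₂}, u_m, u_e), define V^{sf}(c) = −(R/4π)·(2·ln|c| − 2·S₁(c)), α(c) = −(1/4π²)·(arg(c) + S₂(c)), the 2-form ω₀^{sf}(u,v) = −2π·[ ( u_{c₂}·(v_m/2π + α(c)·v_e) − v_{c₂}·(u_m/2π + α(c)·u_e) ) + V^{sf}(c)·( (u_e/(2πR))·v_{c₁} − (v_e/(2πR))·u_{c₁} ) ], and the function f(c) = (1/2π)·( Re(c − c·log c) + S(c) ). Then at every point,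 ω₀^{sf}(u,v) = Df(c)(u_c)·v_e − Df(c)(v_c)·u_e + u_{c₂}·(−v_m) − v_{c₂}·(−u_m), where Df(c) is the real Fréchet derivative of f and u_c = (u_{c₁}, u_{c₂}). -/
lemma fderiv_aux (S : ℝ × ℝ → ℝ) (hS : ContDiff ℝ (⊤ : ℕ∞) S)
    (f : ℂ → ℝ)
    (hf : ∀ c : ℂ, f c = (1 / (2 * Real.pi)) * ((c - c * Complex.log c).re + S (c.re, c.im)))
    (c : ℂ) (hc : c ∈ Complex.slitPlane) (u : ℂ) :
    fderiv ℝ f c u = (1 / (2 * Real.pi)) *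
      ((- Real.log ‖c‖) * u.re + Complex.arg c * u.im
        + (fderiv ℝ S (c.re, c.im) (1, 0)) * u.re + (fderiv ℝ S (c.re, c.im) (0, 1)) * u.im) := by
  have hc0 : c ≠ 0 := Complex.slitPlane_ne_zero hc
  have hlog : HasDerivAt Complex.log c⁻¹ c := Complex.hasDerivAt_log hc
  have hg : HasDerivAt (fun z => z - z * Complex.log z) (-Complex.log c) c := by
    have h := (hasDerivAt_id c).sub ((hasDerivAt_id c).mul hlog)
    have e : (1 : ℂ) - (1 * Complex.log c + c * c⁻¹) = -Complex.log c := by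
      field_simp
      ring
    rw [← e]; exact h
  have hgF : HasFDerivAt (fun z => z - z * Complex.log z)
      ((ContinuousLinearMap.smulRight (1 : ℂ →L[ℂ] ℂ) (-Complex.log c)).restrictScalars ℝ) c :=
    hg.hasFDerivAt.restrictScalars ℝ
  have hre : HasFDerivAt (fun z : ℂ => (z - z * Complex.log z).re)
      (Complex.reCLM.comp ((ContinuousLinearMap.smulRight (1 : ℂ →L[ℂ] ℂ) (-Complex.log c)).restrictScalars ℝ)) c :=
    Complex.reCLM.hasFDerivAt.comp c hgF
  set q : ℂ →L[ℝ] ℝ × ℝ := Complex.reCLM.prod Complex.imCLM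
  have hSd : HasFDerivAt S (fderiv ℝ S (c.re, c.im)) (c.re, c.im) :=
    (hS.differentiable (by simp) (c.re, c.im)).hasFDerivAt
  have hScomp : HasFDerivAt (fun z : ℂ => S (z.re, z.im))
      ((fderiv ℝ S (c.re, c.im)).comp q) c := by
    have := hSd.comp c q.hasFDerivAt
    exact this
  have hfF : HasFDerivAt f
      ((1 / (2 * Real.pi)) • (Complex.reCLM.comp ((ContinuousLinearMap.smulRight (1 : ℂ →L[ℂ] ℂ) (-Complex.log c)).restrictScalars ℝ) + (fderiv ℝ S (c.re, c.im)).comp q)) c := by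
    have h := ((hre.add hScomp).const_smul (1 / (2 * Real.pi)))
    refine HasFDerivAt.congr_of_eventuallyEq h ?_
    filter_upwards with z
    simp [hf z, smul_eq_mul]
  rw [hfF.fderiv]
  have hval : ((-Complex.log c) * u).re
      = (- Real.log ‖c‖) * u.re + Complex.arg c * u.im := by
    simp [Complex.mul_re, Complex.log_re, Complex.log_im]
    ring
  have huq : q u = (u.re, u.im) := rfl
  have hdecomp : fderiv ℝ S (c.re, c.im) (u.re, u.im)
      = (fderiv ℝ S (c.re, c.im) (1, 0)) * u.re + (fderiv ℝ S (c.re, c.im) (0, 1)) * u.im := by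
    have : ((u.re, u.im) : ℝ × ℝ) = u.re • ((1:ℝ), (0:ℝ)) + u.im • ((0:ℝ), (1:ℝ)) := by
      simp [Prod.ext_iff]
    rw [this, map_add, map_smul, map_smul]
    simp [smul_eq_mul]; ring
  simp only [ContinuousLinearMap.smul_apply, ContinuousLinearMap.add_apply,
    ContinuousLinearMap.coe_comp', Function.comp_apply,
    ContinuousLinearMap.coe_restrictScalars', ContinuousLinearMap.smulRight_apply,
    ContinuousLinearMap.one_apply, smul_eq_mul, huq, hdecomp]
  rw [show Complex.reCLM (u * -Complex.log c) = ((-Complex.log c) * u).re by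
    rw [mul_comm]; rfl, hval]
  ring



/-- semi-flat part of Proposition 3.1 for the Ooguri–Vafa space:
`ω₀^{sf} = d[(1/2π)(Re(c − c·log c) + S)]∧dθ_e + dc₂∧d(−θ_m)` on the slit plane. -/
theorem stmt9 (S : ℝ × ℝ → ℝ) (hS : ContDiff ℝ (⊤ : ℕ∞) S)
    (S₁ S₂ : ℝ × ℝ → ℝ)
    (hS₁ : ∀ p, S₁ p = fderiv ℝ S p (1, 0))
    (hS₂ : ∀ p, S₂ p = fderiv ℝ S p (0, 1))
    (R : ℝ) (hR : 0 < R)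
    (Vsf : ℂ → ℝ)
    (hVsf : ∀ c : ℂ, Vsf c =
      -(R / (4 * Real.pi)) * (2 * Real.log ‖c‖ - 2 * S₁ (c.re, c.im)))
    (α : ℂ → ℝ)
    (hα : ∀ c : ℂ, α c = -(1 / (4 * Real.pi ^ 2)) * (Complex.arg c + S₂ (c.re, c.im)))
    (ω : ℂ → (ℂ × ℝ × ℝ) → (ℂ × ℝ × ℝ) → ℝ)
    (hω : ∀ (c : ℂ) (u v : ℂ × ℝ × ℝ), ω c u v =
      -2 * Real.pi * ((u.1.im * (v.2.1 / (2 * Real.pi) + α c * v.2.2)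
          - v.1.im * (u.2.1 / (2 * Real.pi) + α c * u.2.2))
        + Vsf c * ((u.2.2 / (2 * Real.pi * R)) * v.1.re
          - (v.2.2 / (2 * Real.pi * R)) * u.1.re)))
    (f : ℂ → ℝ)
    (hf : ∀ c : ℂ, f c = (1 / (2 * Real.pi)) * ((c - c * Complex.log c).re + S (c.re, c.im))) :
    ∀ c ∈ Complex.slitPlane, ∀ u v : ℂ × ℝ × ℝ,
      ω c u v = fderiv ℝ f c u.1 * v.2.2 - fderiv ℝ f c v.1 * u.2.2
        + u.1.im * (-v.2.1) - v.1.im * (-u.2.1) := by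
  intro c hc u v
  have hπ : Real.pi ≠ 0 := Real.pi_ne_zero
  have hR0 : R ≠ 0 := ne_of_gt hR
  rw [hω, hVsf, hα, fderiv_aux S hS f hf c hc u.1, fderiv_aux S hS f hf c hc v.1,
    hS₁ (c.re, c.im), hS₂ (c.re, c.im)]
  field_simp
  ring
end

section
/- Let κ : ℤ → ℝ be defined by κ(0) = 0 and κ(n) = 1/|n| for n ≠ 0, and let γ denote the Euler–Mascheroni constant. Then for every ρ > 0, the series Σ_{n∈ℤ} [ (ρ² + (x+n)²)^{−1/2} − κ(n) ] converges absolutely for every x ∈ ℝ, and ∫₀¹ Σ_{n∈ℤ} [ (ρ² + (x+n)²)^{−1/2} − κ(n) ] dx = −2·ln(ρ/2) − 2γ. -/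
/-!
For `n ≠ 0` the summand `(ρ² + (x + n)²)^{-1/2} - 1/|n|` is `O(n⁻²)` uniformly for bounded `x`,
which gives absolute convergence and lets the integral over `[0, 1]` be taken term by term.
As `arsinh (t / ρ)` is a primitive of `(ρ² + t²)^{-1/2}`, the `n`-th integral is
`arsinh ((n + 1) / ρ) - arsinh (n / ρ) - κ n`. On `n ≥ 1` and on `n ≤ -1` (where oddness of `arsinh`
is used) the partial sums telescope to `arsinh (N / ρ) - H_N` up to boundary terms that cancel
the `n = 0` term, and `arsinh t = log t + log 2 + o(1)`, `H_N = log N + γ + o(1)` give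
`log (2 / ρ) - γ` for each half.
-/

open Real Filter Topology MeasureTheory Finset

lemma abs_one_div_sqrt_sub_one_div_abs_le (ρ x t : ℝ) (ht : 1 ≤ |t|) (hxt : 2 * |x| ≤ |t|) :
    |(1 / √(ρ ^ 2 + (x + t) ^ 2) - 1 / |t|)| ≤ 2 * (ρ ^ 2 + (|x| + 1) ^ 2) / t ^ 2 := by
  set a := √(ρ ^ 2 + (x + t) ^ 2)
  have hb : 0 < |t| := by linarith
  have ha : |t| / 2 ≤ a := calc
    |t| / 2 ≤ |x + t| := by
      linarith [show |t| ≤ |x + t| + |x| by simpa using abs_add_le (x + t) (-x)]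
    _ ≤ a := Real.abs_le_sqrt (by nlinarith)
  have hnum : |t ^ 2 - a ^ 2| ≤ ρ ^ 2 + x ^ 2 + 2 * |x| * |t| := by
    rw [Real.sq_sqrt (by positivity),
      show t ^ 2 - (ρ ^ 2 + (x + t) ^ 2) = -(ρ ^ 2 + x ^ 2 + 2 * x * t) by ring, abs_neg]
    refine (abs_add_le _ _).trans (le_of_eq ?_)
    rw [abs_of_nonneg (by positivity), abs_mul, abs_mul, abs_two]
  have hden : 3 / 4 * |t| ^ 3 ≤ a * |t| * (a + |t|) := by
    have h := mul_le_mul ha (by linarith : |t| / 2 + |t| ≤ a + |t|) (by positivity) (by positivity)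
    nlinarith [mul_le_mul_of_nonneg_left h hb.le]
  have ha0 : 0 < a := by linarith
  have hdiff : 1 / a - 1 / |t| = (t ^ 2 - a ^ 2) / (a * |t| * (a + |t|)) := by
    rw [← sq_abs t]
    field_simp
    ring
  calc |(1 / a - 1 / |t|)|
      = |t ^ 2 - a ^ 2| / (a * |t| * (a + |t|)) := by
        rw [hdiff, abs_div, abs_of_pos (by positivity : 0 < a * |t| * (a + |t|))]
    _ ≤ (ρ ^ 2 + x ^ 2 + 2 * |x| * |t|) / (3 / 4 * |t| ^ 3) :=
        div_le_div₀ (by positivity) hnum (by positivity) hden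
    _ ≤ 2 * (ρ ^ 2 + (|x| + 1) ^ 2) / |t| ^ 2 := by
        rw [div_le_div_iff₀ (by positivity) (by positivity)]
        nlinarith [sq_abs x,
          mul_le_mul_of_nonneg_left ht (by positivity : 0 ≤ |t| ^ 2 * (ρ ^ 2 + x ^ 2)),
          mul_nonneg (abs_nonneg x) (pow_pos hb 3).le, pow_pos hb 3]
    _ = 2 * (ρ ^ 2 + (|x| + 1) ^ 2) / t ^ 2 := by rw [sq_abs]

lemma eventually_abs_one_div_sqrt_sub_one_div_abs_le (ρ M : ℝ) :
    ∀ᶠ n : ℤ in cofinite, ∀ x : ℝ, |x| ≤ M →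
      |(1 / √(ρ ^ 2 + (x + n) ^ 2) - 1 / |(n : ℝ)|)| ≤
        2 * (ρ ^ 2 + (M + 1) ^ 2) / (n : ℝ) ^ 2 := by
  filter_upwards [(tendsto_norm_comp_cofinite_atTop_of_isClosedEmbedding
    Int.isClosedEmbedding_coe_real).eventually_ge_atTop (max 1 (2 * M))] with n hn x hx
  rw [Function.comp_apply, Real.norm_eq_abs, max_le_iff] at hn
  refine (abs_one_div_sqrt_sub_one_div_abs_le ρ x n hn.1 (by linarith [hn.2])).trans ?_
  gcongr

lemma summable_of_eventually_norm_le_div_sq {E : Type*} [NormedAddCommGroup E] [CompleteSpace E]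
    {f : ℤ → E} {C : ℝ} (h : ∀ᶠ n : ℤ in cofinite, ‖f n‖ ≤ C / (n : ℝ) ^ 2) : Summable f :=
  .of_norm_bounded_eventually ((summable_one_div_int_pow.2 one_lt_two).mul_left C)
    (by simpa only [mul_one_div] using h)

lemma summable_abs_one_div_sqrt_sub_one_div_abs (ρ x : ℝ) :
    Summable fun n : ℤ => |(1 / √(ρ ^ 2 + (x + n) ^ 2) - 1 / |(n : ℝ)|)| :=
  summable_of_eventually_norm_le_div_sq <|
    (eventually_abs_one_div_sqrt_sub_one_div_abs_le ρ |x|).mono fun n hn => by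
      simpa only [Real.norm_eq_abs, abs_abs] using hn x le_rfl

lemma summable_integral_norm_one_div_sqrt_sub_one_div_abs (ρ : ℝ) :
    Summable fun n : ℤ =>
      ∫ x in Set.Ioc (0 : ℝ) 1, ‖1 / √(ρ ^ 2 + (x + n) ^ 2) - 1 / |(n : ℝ)|‖ :=
  summable_of_eventually_norm_le_div_sq <|
    (eventually_abs_one_div_sqrt_sub_one_div_abs_le ρ 1).mono fun n hn => by
      have hbound : ∀ x ∈ Set.Ioc (0 : ℝ) 1,
          ‖‖1 / √(ρ ^ 2 + (x + n) ^ 2) - 1 / |(n : ℝ)|‖‖ ≤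
            2 * (ρ ^ 2 + (1 + 1) ^ 2) / (n : ℝ) ^ 2 :=
        fun x hx => by
          rw [norm_norm, Real.norm_eq_abs]
          exact hn x (abs_le.2 ⟨by linarith [hx.1], hx.2⟩)
      simpa using norm_setIntegral_le_of_norm_le_const (μ := volume) measure_Ioc_lt_top hbound

lemma continuous_one_div_sqrt_sq_add_sq {ρ : ℝ} (hρ : 0 < ρ) :
    Continuous fun t : ℝ => 1 / √(ρ ^ 2 + t ^ 2) :=
  continuous_const.div (by fun_prop) fun t => by positivity

lemma hasDerivAt_arsinh_div {ρ : ℝ} (hρ : 0 < ρ) (t : ℝ) :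
    HasDerivAt (fun s => arsinh (s / ρ)) (1 / √(ρ ^ 2 + t ^ 2)) t := by
  refine ((hasDerivAt_arsinh (t / ρ)).comp t ((hasDerivAt_id t).div_const ρ)).congr_deriv ?_
  rw [show ρ ^ 2 + t ^ 2 = ρ ^ 2 * (1 + (t / ρ) ^ 2) by field_simp, sqrt_mul (by positivity),
    sqrt_sq hρ.le]
  field_simp

lemma integral_zero_one_one_div_sqrt_add_sq_sub {ρ : ℝ} (hρ : 0 < ρ) (c k : ℝ) :
    ∫ x in (0 : ℝ)..1, (1 / √(ρ ^ 2 + (x + c) ^ 2) - k) =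
      arsinh ((c + 1) / ρ) - arsinh (c / ρ) - k := by
  have hc : Continuous fun x : ℝ => 1 / √(ρ ^ 2 + (x + c) ^ 2) :=
    (continuous_one_div_sqrt_sq_add_sq hρ).comp (continuous_add_const c)
  rw [intervalIntegral.integral_sub (hc.intervalIntegrable 0 1) intervalIntegrable_const,
    intervalIntegral.integral_comp_add_right (fun t => 1 / √(ρ ^ 2 + t ^ 2)),
    intervalIntegral.integral_eq_sub_of_hasDerivAt (fun t _ => hasDerivAt_arsinh_div hρ t)
      ((continuous_one_div_sqrt_sq_add_sq hρ).intervalIntegrable _ _)]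
  simp [add_comm]

lemma tendsto_arsinh_sub_log : Tendsto (fun t => arsinh t - log t) atTop (𝓝 (log 2)) := by
  have hcont : Tendsto (fun s : ℝ => log (1 + √(1 + s ^ 2))) (𝓝 0) (𝓝 (log 2)) := by
    have : ContinuousAt (fun s : ℝ => log (1 + √(1 + s ^ 2))) 0 := by
      fun_prop (disch := positivity)
    simpa [one_add_one_eq_two] using this.tendsto
  refine (hcont.comp tendsto_inv_atTop_zero).congr' ?_
  filter_upwards [eventually_gt_atTop 0] with t ht
  have hsqrt : √(1 + t ^ 2) = t * √(1 + t⁻¹ ^ 2) := by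
    rw [show 1 + t ^ 2 = t ^ 2 * (1 + t⁻¹ ^ 2) by field_simp; ring, sqrt_mul (sq_nonneg t),
      sqrt_sq ht.le]
  rw [Function.comp_apply, arsinh, hsqrt,
    show t + t * √(1 + t⁻¹ ^ 2) = t * (1 + √(1 + t⁻¹ ^ 2)) by ring, log_mul ht.ne' (by positivity)]
  ring

lemma tendsto_arsinh_div_sub_log {ρ : ℝ} (hρ : 0 < ρ) :
    Tendsto (fun t => arsinh (t / ρ) - log t) atTop (𝓝 (log (2 / ρ))) := by
  rw [log_div two_ne_zero hρ.ne']
  refine ((tendsto_arsinh_sub_log.comp (tendsto_id.atTop_div_const hρ)).sub_const (log ρ)).congr' ?_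
  filter_upwards [eventually_gt_atTop 0] with t ht
  simp only [Function.comp_apply, id, log_div ht.ne' hρ.ne']
  ring

lemma hasSum_sub_sub_one_div_of_tendsto_sub_log {B : ℕ → ℝ} {L : ℝ}
    (hs : Summable fun i : ℕ => B (i + 1) - B i - 1 / ((i : ℝ) + 1))
    (hB : Tendsto (fun n : ℕ => B n - log n) atTop (𝓝 L)) :
    HasSum (fun i : ℕ => B (i + 1) - B i - 1 / ((i : ℝ) + 1))
      (L - eulerMascheroniConstant - B 0) := by
  refine hs.hasSum_iff_tendsto_nat.2 ?_
  have hpartial (n : ℕ) : ∑ i ∈ range n, (B (i + 1) - B i - 1 / ((i : ℝ) + 1)) =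
      (B n - log n) - ((harmonic n : ℝ) - log n) - B 0 := by
    rw [sum_sub_distrib, sum_range_sub, harmonic, Rat.cast_sum]
    push_cast
    simp only [one_div]
    ring
  simpa only [hpartial] using (hB.sub tendsto_harmonic_sub_log).sub_const (B 0)

lemma hasSum_int_sub_sub_one_div_abs_of_odd {A : ℝ → ℝ} {L : ℝ} (hodd : ∀ t, A (-t) = -A t)
    (hA : Tendsto (fun t => A t - log t) atTop (𝓝 L))
    (hs : Summable fun n : ℤ => A (n + 1) - A n - 1 / |(n : ℝ)|) :
    HasSum (fun n : ℤ => A (n + 1) - A n - 1 / |(n : ℝ)|)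
      (2 * L - 2 * eulerMascheroniConstant) := by
  set f := fun n : ℤ => A (n + 1) - A n - 1 / |(n : ℝ)|
  have hA0 : A 0 = 0 := by linarith [neg_zero (G := ℝ) ▸ hodd 0]
  have hf₁ : (fun i : ℕ => f (i + 1)) =
      fun i : ℕ => A ((i + 1 : ℕ) + 1) - A ((i : ℝ) + 1) - 1 / ((i : ℝ) + 1) := by
    ext i
    simp only [f]
    push_cast
    rw [abs_of_pos (by positivity)]
  have hf₂ : (fun i : ℕ => f (-(i + 1))) =
      fun i : ℕ => A (i + 1 : ℕ) - A i - 1 / ((i : ℝ) + 1) := by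
    ext i
    simp only [f]
    push_cast
    rw [show -((i : ℝ) + 1) + 1 = -i by ring, hodd, hodd, abs_neg, abs_of_pos (by positivity)]
    ring
  have hshift : Tendsto (fun n : ℕ => A ((n : ℝ) + 1) - log n) atTop (𝓝 L) := by
    have h := (hA.comp (tendsto_natCast_atTop_atTop.comp (tendsto_add_atTop_nat 1))).add
      tendsto_log_nat_add_one_sub_log
    simpa using h
  have h₁ := hasSum_sub_sub_one_div_of_tendsto_sub_log
    (hf₁ ▸ hs.comp_injective (by intro a b; simp)) hshift
  have h₂ := hasSum_sub_sub_one_div_of_tendsto_sub_log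
    (hf₂ ▸ hs.comp_injective (by intro a b; simp)) (hA.comp tendsto_natCast_atTop_atTop)
  rw [← hf₁] at h₁
  rw [← hf₂] at h₂
  convert h₁.of_add_one_of_neg_add_one h₂ using 1
  simp [f, hA0]
  ring

/-- the regularized series `Σ_{n∈ℤ}[(ρ² + (x+n)²)^{−1/2} − κ(n)]`
converges absolutely for every `x`, and its integral over `x ∈ [0,1]` equals
`−2·ln(ρ/2) − 2γ`, `γ` the Euler–Mascheroni constant. -/
theorem stmt10 (κ : ℤ → ℝ) (hκ0 : κ 0 = 0) (hκ : ∀ n : ℤ, n ≠ 0 → κ n = 1 / |(n : ℝ)|)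
    (ρ : ℝ) (hρ : 0 < ρ) :
    (∀ x : ℝ, Summable (fun n : ℤ => |1 / Real.sqrt (ρ ^ 2 + (x + n) ^ 2) - κ n|))
    ∧ (∫ x in (0 : ℝ)..1, (∑' n : ℤ, (1 / Real.sqrt (ρ ^ 2 + (x + n) ^ 2) - κ n)))
        = -2 * Real.log (ρ / 2) - 2 * Real.eulerMascheroniConstant := by
  -- Lean's `1 / |0| = 0` makes `n ↦ 1 / |n|` vanish at `0`, as `κ` does.
  obtain rfl : κ = fun n : ℤ => 1 / |(n : ℝ)| := funext fun n => by
    rcases eq_or_ne n 0 with rfl | hn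
    · simp [hκ0]
    · exact hκ n hn
  refine ⟨summable_abs_one_div_sqrt_sub_one_div_abs ρ, ?_⟩
  have hswap := hasSum_integral_of_summable_integral_norm
    (F := fun (n : ℤ) (x : ℝ) => 1 / √(ρ ^ 2 + (x + n) ^ 2) - 1 / |(n : ℝ)|)
    (fun n => (((continuous_one_div_sqrt_sq_add_sq hρ).comp (continuous_add_const (n : ℝ))).sub
      continuous_const).integrableOn_Ioc)
    (summable_integral_norm_one_div_sqrt_sub_one_div_abs ρ)
  simp only [← intervalIntegral.integral_of_le zero_le_one,
    integral_zero_one_one_div_sqrt_add_sq_sub hρ] at hswap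
  have hsum := hasSum_int_sub_sub_one_div_abs_of_odd (A := fun t => arsinh (t / ρ))
    (fun t => by rw [neg_div, arsinh_neg]) (tendsto_arsinh_div_sub_log hρ) hswap.summable
  rw [← inv_div, log_inv] at hsum
  rw [hswap.unique hsum]
  ring
end

section
/- Let K₀ denote the modified Bessel function given by K₀(y) = ∫₀^∞ exp(−y·cosh t) dt for y > 0. For ρ > 0 and θ ∈ ℝ, set q(t) = exp(iθ − ρ·(t + 1/t)) for t > 0 (so |q(t)| ≤ e^{−2ρ} < 1). Then the integral ∫₀^∞ ( q(t)/(1 − q(t)) )·t^{−1} dt converges absolutely, the series Σ_{n=1}^∞ e^{i·n·θ}·K₀(2nρ) converges absolutely, and ∫₀^∞ ( q(t)/(1 − q(t)) )·t^{−1} dt = 2·Σ_{n=1}^∞ e^{i·n·θ}·K₀(2nρ). -/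
/-!
Expand `q/(1-q) = ∑_{n ≥ 1} qⁿ`, legitimate since `‖q t‖ ≤ e^{-2ρ} < 1` for `t > 0`. The
bound `‖qⁿ/t‖ ≤ e^{-2(n-1)ρ} ‖q/t‖` makes the integrals of the norms summable, so sum and
integral may be exchanged. The `n`-th term is `e^{inθ} ∫₀^∞ e^{-nρ(t+1/t)} dt/t`, and the
substitution `t = eˣ` turns `t + 1/t` into `2 cosh x`; folding the even integrand over `ℝ` onto
`(0, ∞)` gives `e^{inθ} · 2 K₀(2nρ)`.
-/

open MeasureTheory Real Set

lemma sq_div_four_le_cosh (x : ℝ) : x ^ 2 / 4 ≤ cosh x := by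
  have h := quadratic_le_exp_of_nonneg (abs_nonneg x)
  rw [← cosh_abs, cosh_eq]
  nlinarith [sq_abs x, exp_pos (-|x|), abs_nonneg x]

lemma integrable_exp_neg_mul_cosh {y : ℝ} (hy : 0 < y) :
    Integrable fun x : ℝ => exp (-y * cosh x) := by
  refine (integrable_exp_neg_mul_sq (by positivity : 0 < y / 4)).mono'
    (by fun_prop) (ae_of_all _ fun x => ?_)
  rw [norm_of_nonneg (exp_pos _).le, exp_le_exp]
  nlinarith [sq_div_four_le_cosh x]

lemma integral_exp_neg_mul_cosh (y : ℝ) :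
    ∫ x : ℝ, exp (-y * cosh x) = 2 * ∫ x in Ioi 0, exp (-y * cosh x) := by
  rw [← integral_comp_abs (f := fun x => exp (-y * cosh x))]
  simp_rw [cosh_abs]

lemma integrableOn_Ioi_zero_iff_integrable_comp_exp {E : Type*} [NormedAddCommGroup E]
    [NormedSpace ℝ E] (g : ℝ → E) :
    IntegrableOn g (Ioi 0) ↔ Integrable fun x => exp x • g (exp x) := by
  simpa [abs_of_pos (exp_pos _)] using integrableOn_image_iff_integrableOn_abs_deriv_smul
    MeasurableSet.univ (fun x _ => (hasDerivAt_exp x).hasDerivWithinAt) exp_injective.injOn g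

lemma setIntegral_Ioi_zero_eq_integral_comp_exp {E : Type*} [NormedAddCommGroup E]
    [NormedSpace ℝ E] (g : ℝ → E) :
    ∫ t in Ioi 0, g t = ∫ x, exp x • g (exp x) := by
  simpa [abs_of_pos (exp_pos _)] using integral_image_eq_integral_abs_deriv_smul
    MeasurableSet.univ (fun x _ => (hasDerivAt_exp x).hasDerivWithinAt) exp_injective.injOn g

lemma exp_smul_exp_neg_mul_add_one_div_div (a x : ℝ) :
    exp x • (exp (-(a * (exp x + 1 / exp x))) / exp x) = exp (-(2 * a) * cosh x) := by
  rw [smul_eq_mul, mul_div_cancel₀ _ (exp_ne_zero x), one_div, ← exp_neg, cosh_eq]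
  ring_nf

lemma integrableOn_exp_neg_mul_add_one_div_div {a : ℝ} (ha : 0 < a) :
    IntegrableOn (fun t => exp (-(a * (t + 1 / t))) / t) (Ioi 0) := by
  rw [integrableOn_Ioi_zero_iff_integrable_comp_exp]
  simp_rw [exp_smul_exp_neg_mul_add_one_div_div]
  exact integrable_exp_neg_mul_cosh (by positivity)

lemma integral_exp_neg_mul_add_one_div_div (a : ℝ) :
    ∫ t in Ioi 0, exp (-(a * (t + 1 / t))) / t = 2 * ∫ t in Ioi 0, exp (-(2 * a) * cosh t) := by
  rw [setIntegral_Ioi_zero_eq_integral_comp_exp]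
  simp_rw [exp_smul_exp_neg_mul_add_one_div_div]
  exact integral_exp_neg_mul_cosh _

section GeometricSeries

variable {α 𝕜 : Type*} [MeasurableSpace α] {μ : Measure α} [RCLike 𝕜] {f g : α → 𝕜} {r : ℝ}

lemma norm_pow_succ_div_le {a b : 𝕜} (ha : ‖a‖ ≤ r) (n : ℕ) :
    ‖a ^ (n + 1) / b‖ ≤ r ^ n * ‖a / b‖ := by
  rw [pow_succ, mul_div_assoc, norm_mul, norm_pow]
  gcongr

lemma MeasureTheory.Integrable.pow_succ_div (hfm : AEStronglyMeasurable f μ)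
    (hf : ∀ᵐ x ∂μ, ‖f x‖ ≤ r) (hfg : Integrable (fun x => f x / g x) μ) (n : ℕ) :
    Integrable (fun x => f x ^ (n + 1) / g x) μ := by
  refine (hfg.norm.const_mul (r ^ n)).mono' ?_ (hf.mono fun x hx => norm_pow_succ_div_le hx n)
  simp_rw [pow_succ, mul_div_assoc]
  exact (hfm.pow n).mul hfg.aestronglyMeasurable

lemma summable_integral_norm_pow_succ_div (hr0 : 0 ≤ r) (hr : r < 1)
    (hf : ∀ᵐ x ∂μ, ‖f x‖ ≤ r) (hfg : Integrable (fun x => f x / g x) μ) :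
    Summable fun n : ℕ => ∫ x, ‖f x ^ (n + 1) / g x‖ ∂μ := by
  refine Summable.of_nonneg_of_le (fun n => integral_nonneg fun x => norm_nonneg _)
    (fun n => ?_) ((summable_geometric_of_lt_one hr0 hr).mul_right (∫ x, ‖f x / g x‖ ∂μ))
  rw [← integral_const_mul]
  exact integral_mono_of_nonneg (ae_of_all _ fun x => norm_nonneg _)
    (hfg.norm.const_mul _) (hf.mono fun x hx => norm_pow_succ_div_le hx n)

lemma MeasureTheory.Integrable.div_one_sub_div (hfm : AEStronglyMeasurable f μ) (hr : r < 1)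
    (hf : ∀ᵐ x ∂μ, ‖f x‖ ≤ r) (hfg : Integrable (fun x => f x / g x) μ) :
    Integrable (fun x => f x / (1 - f x) / g x) μ := by
  refine (hfg.norm.const_mul (1 - r)⁻¹).mono' ?_ (hf.mono fun x hx => ?_)
  · rw [show (fun x => f x / (1 - f x) / g x) = fun x => f x / g x / (1 - f x) from
      funext fun x => by ring]
    exact hfg.aestronglyMeasurable.div₀ (aestronglyMeasurable_const.sub hfm)
  · have h1 : 1 - r ≤ ‖1 - f x‖ := by
      have := norm_sub_norm_le (1 : 𝕜) (f x)
      rw [norm_one] at this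
      linarith
    rw [show f x / (1 - f x) / g x = f x / g x / (1 - f x) by ring, norm_div, div_eq_inv_mul]
    gcongr

lemma integral_div_one_sub_div_eq_tsum (hfm : AEStronglyMeasurable f μ) (hr0 : 0 ≤ r)
    (hr : r < 1) (hf : ∀ᵐ x ∂μ, ‖f x‖ ≤ r) (hfg : Integrable (fun x => f x / g x) μ) :
    ∫ x, f x / (1 - f x) / g x ∂μ = ∑' n : ℕ, ∫ x, f x ^ (n + 1) / g x ∂μ := by
  rw [integral_tsum_of_summable_integral_norm (hfg.pow_succ_div hfm hf)
    (summable_integral_norm_pow_succ_div hr0 hr hf hfg)]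
  refine integral_congr_ae (hf.mono fun x hx => ?_)
  have hgeom : ∑' n : ℕ, f x ^ (n + 1) = f x / (1 - f x) := by
    simp_rw [pow_succ']
    rw [tsum_mul_left, tsum_geometric_of_norm_lt_one (hx.trans_lt hr), div_eq_mul_inv]
  simp only [← hgeom, tsum_div_const]

end GeometricSeries

lemma two_le_add_one_div {t : ℝ} (ht : 0 < t) : 2 ≤ t + 1 / t := by
  have h : t + 1 / t - 2 = (t - 1) ^ 2 / t := by field_simp; ring
  linarith [show 0 ≤ (t - 1) ^ 2 / t by positivity]

/-- The Darboux coordinate `X_{γ_e}(ζ)` at the point `ζ = -(c/|c|) t` of the BPS ray,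
with `ρ = πR|c|` and `θ = θ_{γ_e}`. -/
noncomputable def darbouxX (ρ θ t : ℝ) : ℂ :=
  Complex.exp (Complex.I * θ - ((ρ * (t + 1 / t) : ℝ) : ℂ))

section Darboux

variable {ρ θ : ℝ}

lemma measurable_darbouxX : Measurable (darbouxX ρ θ) := by
  unfold darbouxX; fun_prop

lemma darbouxX_pow (t : ℝ) (n : ℕ) :
    darbouxX ρ θ t ^ n
      = Complex.exp (Complex.I * n * θ) * (exp (-(n * ρ * (t + 1 / t))) : ℂ) := by
  rw [darbouxX, ← Complex.exp_nat_mul, Complex.ofReal_exp, ← Complex.exp_add]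
  push_cast; ring_nf

lemma norm_darbouxX_pow (t : ℝ) (n : ℕ) :
    ‖darbouxX ρ θ t ^ n‖ = exp (-(n * ρ * (t + 1 / t))) := by
  rw [darbouxX_pow, norm_mul, Complex.norm_exp, Complex.norm_real, norm_of_nonneg (exp_pos _).le]
  simp

lemma norm_darbouxX_le (hρ : 0 ≤ ρ) {t : ℝ} (ht : 0 < t) :
    ‖darbouxX ρ θ t‖ ≤ exp (-(2 * ρ)) := by
  simpa [exp_le_exp] using
    (norm_darbouxX_pow (θ := θ) t 1).trans_le (exp_le_exp.2 (by nlinarith [two_le_add_one_div ht]))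

lemma integrableOn_darbouxX_div (hρ : 0 < ρ) :
    IntegrableOn (fun t : ℝ => darbouxX ρ θ t / t) (Ioi 0) := by
  refine (integrableOn_exp_neg_mul_add_one_div_div hρ).congr'
    (measurable_darbouxX.div Complex.measurable_ofReal).aestronglyMeasurable ?_
  refine ae_of_all _ fun t => ?_
  rw [norm_div, norm_div, Complex.norm_real, ← pow_one (darbouxX ρ θ t), norm_darbouxX_pow,
    Nat.cast_one, one_mul, norm_of_nonneg (exp_pos _).le]

lemma integral_darbouxX_pow_div (n : ℕ) :
    ∫ t in Ioi 0, darbouxX ρ θ t ^ n / t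
      = Complex.exp (Complex.I * n * θ) * ↑(2 * ∫ t in Ioi 0, exp (-(2 * (n * ρ)) * cosh t)) := by
  simp_rw [darbouxX_pow, mul_div_assoc, ← Complex.ofReal_div]
  rw [integral_const_mul, integral_complex_ofReal, integral_exp_neg_mul_add_one_div_div]

end Darboux

/-- with `q(t) = exp(iθ − ρ(t + 1/t))`, `ρ > 0`, the integral
`∫₀^∞ (q/(1−q))·t⁻¹ dt` converges absolutely, the series `Σ_{n≥1} e^{inθ}K₀(2nρ)`
converges absolutely, and the integral equals twice the sum, where
`K₀(y) = ∫₀^∞ exp(−y·cosh t) dt`. -/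
theorem stmt14 (K₀ : ℝ → ℝ)
    (hK₀ : ∀ y : ℝ, 0 < y → K₀ y = ∫ t in Set.Ioi (0 : ℝ), Real.exp (-y * Real.cosh t))
    (ρ θ : ℝ) (hρ : 0 < ρ)
    (q : ℝ → ℂ)
    (hq : ∀ t : ℝ, q t = Complex.exp (Complex.I * (θ : ℂ) - ((ρ * (t + 1 / t) : ℝ) : ℂ))) :
    MeasureTheory.IntegrableOn (fun t : ℝ => q t / (1 - q t) / (t : ℂ)) (Set.Ioi 0)
    ∧ Summable (fun n : ℕ =>
        ‖Complex.exp (Complex.I * ((n : ℂ) + 1) * (θ : ℂ)) * (K₀ (2 * (n + 1) * ρ) : ℂ)‖)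
    ∧ (∫ t in Set.Ioi (0 : ℝ), q t / (1 - q t) / (t : ℂ))
        = 2 * ∑' n : ℕ, Complex.exp (Complex.I * ((n : ℂ) + 1) * (θ : ℂ)) * (K₀ (2 * (n + 1) * ρ) : ℂ) := by
  obtain rfl : q = darbouxX ρ θ := funext hq
  have hX : ∀ᵐ t ∂volume.restrict (Ioi 0), ‖darbouxX ρ θ t‖ ≤ exp (-(2 * ρ)) :=
    ae_restrict_of_forall_mem measurableSet_Ioi fun t ht => norm_darbouxX_le hρ.le ht
  have hr : exp (-(2 * ρ)) < 1 := exp_lt_one_iff.2 (by linarith)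
  have hXm : AEStronglyMeasurable (darbouxX ρ θ) (volume.restrict (Ioi 0)) :=
    measurable_darbouxX.aestronglyMeasurable
  have hXint := integrableOn_darbouxX_div (θ := θ) hρ
  have hterm : ∀ n : ℕ, ∫ t in Ioi 0, darbouxX ρ θ t ^ (n + 1) / t
      = 2 * (Complex.exp (Complex.I * ((n : ℂ) + 1) * θ) * (K₀ (2 * (n + 1) * ρ) : ℂ)) := by
    intro n
    rw [integral_darbouxX_pow_div, hK₀ _ (by positivity)]
    push_cast
    ring_nf
  refine ⟨Integrable.div_one_sub_div hXm hr hX hXint, ?_, ?_⟩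
  · refine Summable.of_nonneg_of_le (fun n => norm_nonneg _) (fun n => ?_)
      ((summable_integral_norm_pow_succ_div (exp_pos _).le hr hX hXint).div_const 2)
    calc _ = ‖∫ t in Ioi 0, darbouxX ρ θ t ^ (n + 1) / t‖ / 2 := by
          rw [hterm, norm_mul]; simp
      _ ≤ _ := by gcongr; exact norm_integral_le_integral_norm _
  · rw [integral_div_one_sub_div_eq_tsum hXm (exp_pos _).le hr hX hXint, tsum_congr hterm,
      tsum_mul_left]
end

section
/- Let K₁ denote the modified Bessel function given by K₁(y) = ∫₀^∞ exp(−y·cosh t)·cosh t dt for y > 0. For ρ > 0 and θ ∈ ℝ, set q(t) = exp(iθ − ρ·(t + 1/t)) for t > 0. Then the integral ∫₀^∞ q(t)/(1 − q(t)) dt converges absolutely, the series Σ_{n=1}^∞ e^{i·n·θ}·K₁(2nρ) converges absolutely, and ∫₀^∞ q(t)/(1 − q(t)) dt = 2·Σ_{n=1}^∞ e^{i·n·θ}·K₁(2nρ). -/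
/-!
Since `|q(t)| = exp(-ρ(t + 1/t)) ≤ e^{-2ρ} < 1`, `q/(1-q) = Σ_{n≥1} qⁿ` with `|qⁿ| ≤ e^{-2(n-1)ρ}|q|`,
so the series may be integrated termwise and `q/(1-q)` is integrable. The `n`-th term is
`e^{inθ} ∫₀^∞ exp(-nρ(t + 1/t)) dt`; the substitution `t = eˢ` turns `t + 1/t` into `2 cosh s` and
`dt` into `eˢ ds`, and since the rest of the integrand is even, `eˢ` may be replaced by `cosh s`,
which gives `2 K₁(2nρ)`.
-/

open MeasureTheory Set Real

section GeometricSeries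

variable {α 𝕜 : Type*} [MeasurableSpace α] {μ : Measure α} [RCLike 𝕜] {q : α → 𝕜} {r : ℝ}

theorem integrable_pow_succ_of_norm_le (hq : Integrable q μ) (hqr : ∀ᵐ a ∂μ, ‖q a‖ ≤ r)
    (n : ℕ) : Integrable (fun a => q a ^ (n + 1)) μ := by
  refine (hq.norm.const_mul (r ^ n)).mono' (hq.aestronglyMeasurable.pow _) ?_
  filter_upwards [hqr] with a ha
  rw [norm_pow, pow_succ]
  gcongr

theorem summable_integral_norm_pow_succ_of_norm_le (hq : Integrable q μ) (hr₀ : 0 ≤ r)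
    (hr : r < 1) (hqr : ∀ᵐ a ∂μ, ‖q a‖ ≤ r) :
    Summable fun n : ℕ => ∫ a, ‖q a ^ (n + 1)‖ ∂μ := by
  refine .of_nonneg_of_le (fun n => integral_nonneg fun a => norm_nonneg _) (fun n => ?_)
    ((summable_geometric_of_lt_one hr₀ hr).mul_right (∫ a, ‖q a‖ ∂μ))
  rw [← integral_const_mul]
  refine integral_mono_of_nonneg (.of_forall fun a => norm_nonneg _) (hq.norm.const_mul _) ?_
  filter_upwards [hqr] with a ha
  rw [norm_pow, pow_succ]
  gcongr

theorem integrable_div_one_sub_of_norm_le (hq : Integrable q μ) (hr : r < 1)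
    (hqr : ∀ᵐ a ∂μ, ‖q a‖ ≤ r) : Integrable (fun a => q a / (1 - q a)) μ := by
  refine (hq.norm.const_mul (1 - r)⁻¹).mono'
    (hq.aemeasurable.div (aemeasurable_const.sub hq.aemeasurable)).aestronglyMeasurable ?_
  filter_upwards [hqr] with a ha
  have hsub : 1 - r ≤ ‖1 - q a‖ := by
    linarith [norm_sub_norm_le (1 : 𝕜) (q a), (norm_one : ‖(1 : 𝕜)‖ = 1)]
  rw [norm_div, div_eq_inv_mul]
  gcongr

theorem hasSum_integral_pow_succ_of_norm_le (hq : Integrable q μ) (hr₀ : 0 ≤ r) (hr : r < 1)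
    (hqr : ∀ᵐ a ∂μ, ‖q a‖ ≤ r) :
    HasSum (fun n : ℕ => ∫ a, q a ^ (n + 1) ∂μ) (∫ a, q a / (1 - q a) ∂μ) := by
  have hgeom : (fun a => ∑' n : ℕ, q a ^ (n + 1)) =ᵐ[μ] fun a => q a / (1 - q a) := by
    filter_upwards [hqr] with a ha
    simp_rw [pow_succ', tsum_mul_left, tsum_geometric_of_norm_lt_one (ha.trans_lt hr),
      div_eq_mul_inv]
  rw [← integral_congr_ae hgeom]
  exact hasSum_integral_of_summable_integral_norm (integrable_pow_succ_of_norm_le hq hqr)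
    (summable_integral_norm_pow_succ_of_norm_le hq hr₀ hr hqr)

end GeometricSeries

section ExpSubstitution

variable {E : Type*} [NormedAddCommGroup E] [NormedSpace ℝ E]

theorem integral_Ioi_zero_eq_integral_exp_smul_comp (g : ℝ → E) :
    ∫ t in Ioi 0, g t = ∫ x, exp x • g (exp x) := by
  rw [← range_exp, ← image_univ, integral_image_eq_integral_abs_deriv_smul MeasurableSet.univ
    (fun x _ => (hasDerivAt_exp x).hasDerivWithinAt) exp_injective.injOn, Measure.restrict_univ]
  simp_rw [abs_of_pos (exp_pos _)]

theorem integrable_exp_smul_comp_iff (g : ℝ → E) :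
    Integrable (fun x => exp x • g (exp x)) ↔ IntegrableOn g (Ioi 0) := by
  rw [← range_exp, ← image_univ, integrableOn_image_iff_integrableOn_abs_deriv_smul
    MeasurableSet.univ (fun x _ => (hasDerivAt_exp x).hasDerivWithinAt) exp_injective.injOn,
    integrableOn_univ]
  simp_rw [abs_of_pos (exp_pos _)]

end ExpSubstitution

theorem integral_exp_mul_of_even {h : ℝ → ℝ} (heven : ∀ x, h (-x) = h x)
    (hint : Integrable fun x => exp x * h x) :
    ∫ x, exp x * h x = 2 * ∫ x in Ioi 0, cosh x * h x := by
  have hint_neg : Integrable fun x => exp (-x) * h x := by simpa [heven] using hint.comp_neg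
  have hreflect : ∫ x, exp (-x) * h x = ∫ x, exp x * h x := by
    simpa [heven] using integral_neg_eq_self (fun x => exp x * h x) volume
  have hcosh : ∫ x, cosh x * h x = ((∫ x, exp x * h x) + ∫ x, exp (-x) * h x) / 2 := by
    rw [← integral_add hint hint_neg, ← integral_div]
    congr 1 with x
    rw [cosh_eq]
    ring
  have habs : ∀ x, cosh |x| * h |x| = cosh x * h x := fun x => by
    rcases abs_choice x with hx | hx <;> simp [hx, heven]
  calc ∫ x, exp x * h x = ∫ x, cosh x * h x := by rw [hcosh, hreflect]; ring
    _ = ∫ x, cosh |x| * h |x| := by simp_rw [habs]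
    _ = 2 * ∫ x in Ioi 0, cosh x * h x := integral_comp_abs (f := fun x => cosh x * h x)

noncomputable def besselKernel (c t : ℝ) : ℝ := exp (-(c * (t + t⁻¹)))

theorem besselKernel_pos (c t : ℝ) : 0 < besselKernel c t := exp_pos _

theorem besselKernel_pow (c t : ℝ) (n : ℕ) : besselKernel c t ^ n = besselKernel (n * c) t := by
  rw [besselKernel, ← exp_nat_mul, besselKernel]
  ring_nf

theorem besselKernel_exp (c x : ℝ) : besselKernel c (exp x) = exp (-(2 * c) * cosh x) := by
  rw [besselKernel, ← log_exp x, cosh_log (exp_pos _), log_exp]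
  ring_nf

theorem besselKernel_le {c t : ℝ} (hc : 0 ≤ c) (ht : 0 < t) :
    besselKernel c t ≤ exp (-(2 * c)) := by
  have : 2 ≤ t + t⁻¹ := by linarith [cosh_log ht, one_le_cosh (log t)]
  exact exp_le_exp.mpr (by nlinarith)

theorem integrableOn_besselKernel {c : ℝ} (hc : 0 < c) :
    IntegrableOn (besselKernel c) (Ioi 0) := by
  refine (exp_neg_integrableOn_Ioi 0 hc).mono' ?_ ?_
  · refine ContinuousOn.aestronglyMeasurable ?_ measurableSet_Ioi
    exact (continuousOn_const.mul
      (continuousOn_id.add (continuousOn_inv₀.mono fun t ht => ne_of_gt ht))).neg.rexp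
  · refine ae_restrict_of_forall_mem measurableSet_Ioi fun t (ht : 0 < t) => ?_
    rw [norm_of_nonneg (besselKernel_pos c t).le]
    exact exp_le_exp.mpr (by nlinarith [inv_pos.mpr ht])

theorem integral_besselKernel {c : ℝ} (hc : 0 < c) :
    ∫ t in Ioi 0, besselKernel c t = 2 * ∫ s in Ioi 0, exp (-(2 * c) * cosh s) * cosh s := by
  have hint := (integrable_exp_smul_comp_iff (besselKernel c)).mpr (integrableOn_besselKernel hc)
  rw [integral_Ioi_zero_eq_integral_exp_smul_comp (besselKernel c)]
  simp_rw [smul_eq_mul, besselKernel_exp] at hint ⊢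
  rw [integral_exp_mul_of_even (by simp) hint]
  simp_rw [mul_comm (cosh _)]

/-- with `q(t) = exp(iθ − ρ(t + 1/t))`, `ρ > 0`, the integral
`∫₀^∞ q/(1−q) dt` converges absolutely, the series `Σ_{n≥1} e^{inθ}K₁(2nρ)`
converges absolutely, and the integral equals twice the sum, where
`K₁(y) = ∫₀^∞ exp(−y·cosh t)·cosh t dt`. -/
theorem stmt15 (K₁ : ℝ → ℝ)
    (hK₁ : ∀ y : ℝ, 0 < y →
      K₁ y = ∫ t in Set.Ioi (0 : ℝ), Real.exp (-y * Real.cosh t) * Real.cosh t)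
    (ρ θ : ℝ) (hρ : 0 < ρ)
    (q : ℝ → ℂ)
    (hq : ∀ t : ℝ, q t = Complex.exp (Complex.I * (θ : ℂ) - ((ρ * (t + 1 / t) : ℝ) : ℂ))) :
    MeasureTheory.IntegrableOn (fun t : ℝ => q t / (1 - q t)) (Set.Ioi 0)
    ∧ Summable (fun n : ℕ =>
        ‖Complex.exp (Complex.I * ((n : ℂ) + 1) * (θ : ℂ)) * (K₁ (2 * (n + 1) * ρ) : ℂ)‖)
    ∧ (∫ t in Set.Ioi (0 : ℝ), q t / (1 - q t))
        = 2 * ∑' n : ℕ, Complex.exp (Complex.I * ((n : ℂ) + 1) * (θ : ℂ)) * (K₁ (2 * (n + 1) * ρ) : ℂ) := by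
  have hq_eq : q = fun t => Complex.exp (Complex.I * θ) * (besselKernel ρ t : ℂ) := by
    ext t
    rw [hq, besselKernel, Complex.ofReal_exp, ← Complex.exp_add, one_div]
    push_cast
    ring_nf
  have hq_int : IntegrableOn q (Ioi 0) := by
    rw [hq_eq]
    exact (integrableOn_besselKernel hρ).ofReal.const_mul _
  have hq_le : ∀ᵐ t ∂volume.restrict (Ioi 0), ‖q t‖ ≤ exp (-(2 * ρ)) := by
    refine ae_restrict_of_forall_mem measurableSet_Ioi fun t ht => ?_
    rw [hq_eq, norm_mul, Complex.norm_exp_I_mul_ofReal, one_mul, Complex.norm_real,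
      norm_of_nonneg (besselKernel_pos ρ t).le]
    exact besselKernel_le hρ.le ht
  have hr : exp (-(2 * ρ)) < 1 := exp_lt_one_iff.mpr (by linarith)
  have hterm : ∀ n : ℕ, ∫ t in Ioi 0, q t ^ (n + 1) =
      2 * (Complex.exp (Complex.I * ((n : ℂ) + 1) * θ) * (K₁ (2 * (n + 1) * ρ) : ℂ)) := by
    intro n
    have hc : 0 < ((n : ℝ) + 1) * ρ := by positivity
    simp_rw [hq_eq, mul_pow, ← Complex.exp_nat_mul, ← Complex.ofReal_pow, besselKernel_pow,
      Nat.cast_succ]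
    rw [integral_const_mul, integral_complex_ofReal, integral_besselKernel hc,
      ← hK₁ _ (by positivity)]
    push_cast
    ring_nf
  refine ⟨integrable_div_one_sub_of_norm_le hq_int hr hq_le, ?_, ?_⟩
  · refine .of_nonneg_of_le (fun n => norm_nonneg _) (fun n => ?_)
      (summable_integral_norm_pow_succ_of_norm_le hq_int (exp_pos _).le hr hq_le)
    have hnorm := norm_integral_le_integral_norm (μ := volume.restrict (Ioi 0))
      fun t => q t ^ (n + 1)
    rw [hterm, norm_mul, Complex.norm_ofNat] at hnorm
    linarith [norm_nonneg (Complex.exp (Complex.I * ((n : ℂ) + 1) * θ) * (K₁ (2 * (n + 1) * ρ) : ℂ))]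
  · have hsum := hasSum_integral_pow_succ_of_norm_le hq_int (exp_pos _).le hr hq_le
    simp_rw [hterm] at hsum
    exact hsum.tsum_eq.symm.trans tsum_mul_left
end

section
/- Let α ∈ (0,1] and let φ : ℝ → ℂ be Hölder continuous of exponent α with compact support. Define f : ℂ ∖ ℝ → ℂ by f(z) = (1/(2πi))·∫_ℝ φ(t)/(t − z) dt. Then: (i) f is complex differentiable (holomorphic) at every z with Im z ≠ 0; (ii) f(z) → 0 as |z| → ∞; (iii) for every x ∈ ℝ the one-sided limits f₊(x) = lim_{ε→0⁺} f(x + iε) and f₋(x) = lim_{ε→0⁺} f(x − iε) exist, and f₊(x) − f₋(x) = φ(x). -/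
/-!
Holomorphy off the real axis and decay at infinity come from differentiating under the integral
sign and from dominated convergence. For the boundary values at `x`, choose `R` with
`supp φ ⊆ (-R, R]` and `x ∈ (-R, R)`, and split the Cauchy integral at `w ∉ ℝ` as
`∫_{-R}^{R} (φ t - φ x) / (t - w) dt + φ x (log (R - w) - log (-R - w))`.
The Hölder bound dominates the first integrand by `C |t - x| ^ (α - 1)`, which is integrable
since `α > 0`, so the first term is continuous as `w` moves vertically through `x`.
The jump comes from the branch cut of `log`: `log (-R - w) = log (R + w) ∓ π i` according to
the sign of `Im w`, so the limits from above and below differ by `2 π i φ x`.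
-/

open MeasureTheory Filter Set Function Complex Topology Bornology

noncomputable def cauchyIntegral (φ : ℝ → ℂ) (z : ℂ) : ℂ :=
  ∫ t : ℝ, φ t / ((t : ℂ) - z)

theorem continuous_of_holder {E : Type*} [SeminormedAddCommGroup E] {φ : ℝ → E} {C α : ℝ}
    (hα : 0 < α) (hC : ∀ x y : ℝ, ‖φ x - φ y‖ ≤ C * |x - y| ^ α) : Continuous φ := by
  refine continuous_iff_continuousAt.2 fun x => tendsto_iff_norm_sub_tendsto_zero.2 ?_
  have hbound : Tendsto (fun y => C * |y - x| ^ α) (𝓝 x) (𝓝 (C * |x - x| ^ α)) :=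
    ((continuous_abs.comp (continuous_id.sub continuous_const)).rpow_const
      fun _ => Or.inr hα.le).const_mul C |>.tendsto x
  rw [sub_self, abs_zero, Real.zero_rpow hα.ne', mul_zero] at hbound
  exact squeeze_zero (fun _ => norm_nonneg _) (fun y => hC y x) hbound

theorem MeasureTheory.AEStronglyMeasurable.div_measurable {X : Type*} [MeasurableSpace X]
    {μ : Measure X} {f g : X → ℂ} (hf : AEStronglyMeasurable f μ) (hg : Measurable g) :
    AEStronglyMeasurable (fun t => f t / g t) μ := by
  simp_rw [div_eq_mul_inv]
  exact hf.mul hg.inv.aestronglyMeasurable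

theorem locallyIntegrable_abs_rpow {r : ℝ} (hr : -1 < r) :
    LocallyIntegrable (fun t : ℝ => |t| ^ r) :=
  locallyIntegrable_of_norm_le_rpow (C := 1) (α := -r) (by simp) (by simp; linarith)
    (ae_of_all _ fun t => by simp [abs_of_nonneg (Real.rpow_nonneg (abs_nonneg t) r)])
    (measurable_abs.pow_const r).aestronglyMeasurable

theorem intervalIntegrable_abs_sub_rpow {r : ℝ} (hr : -1 < r) (x a b : ℝ) :
    IntervalIntegrable (fun t => |t - x| ^ r) volume a b := by
  have h : IntervalIntegrable (fun t : ℝ => |t| ^ r) volume (a - x) (b - x) :=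
    ((locallyIntegrable_abs_rpow hr).integrableOn_isCompact isCompact_uIcc).intervalIntegrable
  simpa using h.comp_sub_right x

theorem ofReal_sub_ne_zero {z : ℂ} (hz : z.im ≠ 0) (t : ℝ) : (t : ℂ) - z ≠ 0 :=
  fun h => hz <| by simpa using congrArg Complex.im h

theorem abs_im_le_norm_ofReal_sub (z : ℂ) (t : ℝ) : |z.im| ≤ ‖(t : ℂ) - z‖ := by
  simpa using abs_im_le_norm ((t : ℂ) - z)

theorem hasDerivAt_div_sub (c t z : ℂ) (h : t - z ≠ 0) :
    HasDerivAt (fun w : ℂ => c / (t - w)) (c / (t - z) ^ 2) z := by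
  simpa [div_eq_mul_inv] using ((hasDerivAt_id z).const_sub t).fun_inv h |>.const_mul c

theorem Complex.log_neg_of_im_pos {z : ℂ} (hz : 0 < z.im) : log (-z) = log z - Real.pi * I := by
  apply Complex.ext <;> simp [log_re, log_im, arg_neg_eq_arg_sub_pi_of_im_pos hz]

theorem Complex.log_neg_of_im_neg {z : ℂ} (hz : z.im < 0) : log (-z) = log z + Real.pi * I := by
  apply Complex.ext <;> simp [log_re, log_im, arg_neg_eq_arg_add_pi_of_im_neg hz]

theorem integral_inv_ofReal_sub {w : ℂ} (hw : w.im ≠ 0) (a b : ℝ) :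
    ∫ t in a..b, ((t : ℂ) - w)⁻¹ = log (b - w) - log (a - w) := by
  have hcont : Continuous fun t : ℝ => ((t : ℂ) - w)⁻¹ :=
    (continuous_ofReal.sub continuous_const).inv₀ (ofReal_sub_ne_zero hw)
  refine intervalIntegral.integral_eq_sub_of_hasDerivAt (f := fun t : ℝ => log ((t : ℂ) - w))
    (fun t _ => ?_) (hcont.intervalIntegrable _ _)
  simpa using ((hasDerivAt_id (t : ℂ)).sub_const w).comp_ofReal.clog_real
    (mem_slitPlane_iff.2 (Or.inr (by simpa using hw)))

theorem differentiableAt_cauchyIntegral {φ : ℝ → ℂ} (hφ : Integrable φ) {z₀ : ℂ}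
    (hz₀ : z₀.im ≠ 0) : DifferentiableAt ℂ (cauchyIntegral φ) z₀ := by
  set δ := |z₀.im| / 2
  have hδ : 0 < δ := by positivity
  have hs : {z : ℂ | δ < |z.im|} ∈ 𝓝 z₀ :=
    (isOpen_lt continuous_const (by fun_prop)).mem_nhds (half_lt_self (abs_pos.2 hz₀))
  have hF_meas (z : ℂ) : AEStronglyMeasurable fun t : ℝ => φ t / ((t : ℂ) - z) :=
    hφ.1.div_measurable (by fun_prop)
  have hF_int : Integrable fun t : ℝ => φ t / ((t : ℂ) - z₀) := by
    refine (hφ.norm.div_const |z₀.im|).mono' (hF_meas z₀) (ae_of_all _ fun t => ?_)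
    rw [norm_div]
    exact div_le_div_of_nonneg_left (norm_nonneg _) (abs_pos.2 hz₀)
      (abs_im_le_norm_ofReal_sub z₀ t)
  refine (hasDerivAt_integral_of_dominated_loc_of_deriv_le
    (F' := fun z t => φ t / ((t : ℂ) - z) ^ 2) (bound := fun t => ‖φ t‖ / δ ^ 2) hs
    (Eventually.of_forall hF_meas) hF_int (hφ.1.div_measurable (by fun_prop))
    (ae_of_all _ fun t z hz => ?_) (hφ.norm.div_const _)
    (ae_of_all _ fun t z hz => ?_)).2.differentiableAt
  · have : δ ≤ ‖(t : ℂ) - z‖ := hz.le.trans (abs_im_le_norm_ofReal_sub z t)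
    rw [norm_div, norm_pow]
    gcongr
  · exact hasDerivAt_div_sub _ _ _ (ofReal_sub_ne_zero (abs_pos.1 (hδ.trans hz)) t)

theorem tendsto_cauchyIntegral_cobounded {φ : ℝ → ℂ} (hφ : Integrable φ)
    (hsupp : HasCompactSupport φ) : Tendsto (cauchyIntegral φ) (cobounded ℂ) (𝓝 0) := by
  show Tendsto (fun z : ℂ => ∫ t : ℝ, φ t / ((t : ℂ) - z)) (cobounded ℂ) (𝓝 0)
  obtain ⟨R, hR⟩ := hsupp.isCompact.isBounded.subset_closedBall 0
  have hbound : ∀ᶠ z in cobounded ℂ, ∀ t : ℝ, ‖φ t / ((t : ℂ) - z)‖ ≤ ‖φ t‖ := by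
    filter_upwards [tendsto_norm_cobounded_atTop.eventually_ge_atTop (R + 1)] with z hz t
    by_cases ht : φ t = 0
    · simp [ht]
    have htR : ‖(t : ℂ)‖ ≤ R := by simpa using hR (subset_tsupport φ ht)
    have hdist : 1 ≤ ‖(t : ℂ) - z‖ := by
      rw [norm_sub_rev]
      linarith [norm_sub_norm_le z (t : ℂ)]
    rw [norm_div]
    exact div_le_self (norm_nonneg _) hdist
  have : (cobounded ℂ).IsCountablyGenerated := comap_norm_atTop (E := ℂ) ▸ inferInstance
  simpa using tendsto_integral_filter_of_dominated_convergence (f := fun _ => 0)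
    (fun t => ‖φ t‖) (Eventually.of_forall fun z => hφ.1.div_measurable (by fun_prop))
    (hbound.mono fun z h => ae_of_all _ h) hφ.norm (ae_of_all _ fun t => by
      simpa [div_eq_mul_inv] using
        (tendsto_inv₀_cobounded.comp (tendsto_const_sub_cobounded (t : ℂ))).const_mul (φ t))

theorem continuousAt_intervalIntegral_div_sub_vertical {φ : ℝ → ℂ} {C α x : ℝ} (hα : 0 < α)
    (hφ : AEStronglyMeasurable φ) (hC : ∀ t : ℝ, ‖φ t - φ x‖ ≤ C * |t - x| ^ α) (a b : ℝ) :
    ContinuousAt (fun ε : ℝ => ∫ t in a..b, (φ t - φ x) / ((t : ℂ) - (x + ε * I))) 0 := by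
  have hne : ∀ᵐ t : ℝ, t ≠ x := by simp [ae_iff, measure_singleton]
  refine intervalIntegral.continuousAt_of_dominated_interval
    (bound := fun t => C * |t - x| ^ (α - 1))
    (Eventually.of_forall fun ε => ((hφ.sub aestronglyMeasurable_const).div_measurable
      (by fun_prop)).restrict) (Eventually.of_forall fun ε => ?_)
    ((intervalIntegrable_abs_sub_rpow (by linarith) x a b).const_mul C) ?_
  · filter_upwards [hne] with t ht _
    have hpos : 0 < |t - x| := abs_pos.2 (sub_ne_zero.2 ht)
    have hre : |t - x| ≤ ‖(t : ℂ) - (x + ε * I)‖ := by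
      simpa using abs_re_le_norm ((t : ℂ) - (x + ε * I))
    calc ‖(φ t - φ x) / ((t : ℂ) - (x + ε * I))‖ ≤ C * |t - x| ^ α / |t - x| := by
          rw [norm_div]; exact div_le_div₀ ((norm_nonneg _).trans (hC t)) (hC t) hpos hre
      _ = C * |t - x| ^ (α - 1) := by rw [Real.rpow_sub_one hpos.ne', mul_div_assoc]
  · filter_upwards [hne] with t ht _
    refine continuousAt_const.div (by fun_prop) ?_
    simpa [sub_eq_zero] using ht

noncomputable def plemeljRegularPart (φ : ℝ → ℂ) (x R : ℝ) (w : ℂ) : ℂ :=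
  (∫ t in -R..R, (φ t - φ x) / ((t : ℂ) - w)) + φ x * (log (R - w) - log (R + w))

section Plemelj

variable {φ : ℝ → ℂ} {x R : ℝ}

theorem cauchyIntegral_eq_intervalIntegral (hφ : Continuous φ) (hR : support φ ⊆ Ioc (-R) R)
    {w : ℂ} (hw : w.im ≠ 0) :
    cauchyIntegral φ w = (∫ t in -R..R, (φ t - φ x) / ((t : ℂ) - w))
      + φ x * (log (R - w) - log (-R - w)) := by
  have hden := ofReal_sub_ne_zero hw
  have h₁ : IntervalIntegrable (fun t : ℝ => (φ t - φ x) / ((t : ℂ) - w)) volume (-R) R :=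
    ((hφ.sub continuous_const).div (by fun_prop) hden).intervalIntegrable _ _
  have h₂ : IntervalIntegrable (fun t : ℝ => φ x * ((t : ℂ) - w)⁻¹) volume (-R) R :=
    (continuous_const.mul ((by fun_prop : Continuous fun t : ℝ => (t : ℂ) - w).inv₀
      hden)).intervalIntegrable _ _
  have hsupp : support (fun t : ℝ => φ t / ((t : ℂ) - w)) ⊆ Ioc (-R) R :=
    (support_div _ _).subset.trans (inter_subset_left.trans hR)
  have hker := integral_inv_ofReal_sub hw (-R) R
  rw [ofReal_neg] at hker
  rw [cauchyIntegral, ← intervalIntegral.integral_eq_integral_of_support_subset hsupp, ← hker,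
    ← intervalIntegral.integral_const_mul, ← intervalIntegral.integral_add h₁ h₂]
  congr 1 with t
  rw [← div_eq_mul_inv, ← add_div, sub_add_cancel]

theorem cauchyIntegral_eq_regularPart_add (hφ : Continuous φ) (hR : support φ ⊆ Ioc (-R) R)
    {w : ℂ} (hw : 0 < w.im) :
    cauchyIntegral φ w = plemeljRegularPart φ x R w + φ x * Real.pi * I := by
  have hlog : log (-R - w) = log (R + w) - Real.pi * I := by
    rw [← log_neg_of_im_pos (by simpa using hw), neg_add']
  rw [cauchyIntegral_eq_intervalIntegral (x := x) hφ hR hw.ne', hlog, plemeljRegularPart]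
  ring

theorem cauchyIntegral_eq_regularPart_sub (hφ : Continuous φ) (hR : support φ ⊆ Ioc (-R) R)
    {w : ℂ} (hw : w.im < 0) :
    cauchyIntegral φ w = plemeljRegularPart φ x R w - φ x * Real.pi * I := by
  have hlog : log (-R - w) = log (R + w) + Real.pi * I := by
    rw [← log_neg_of_im_neg (by simpa using hw), neg_add']
  rw [cauchyIntegral_eq_intervalIntegral (x := x) hφ hR hw.ne, hlog, plemeljRegularPart]
  ring

theorem continuousAt_plemeljRegularPart_vertical {C α : ℝ} (hα : 0 < α) (hφ : Continuous φ)
    (hC : ∀ t : ℝ, ‖φ t - φ x‖ ≤ C * |t - x| ^ α) (hx : x ∈ Ioo (-R) R) :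
    ContinuousAt (fun ε : ℝ => plemeljRegularPart φ x R (x + ε * I)) 0 := by
  have hlog₁ : ContinuousAt (fun ε : ℝ => log ((R : ℂ) - (x + ε * I))) 0 :=
    ContinuousAt.clog (by fun_prop) (mem_slitPlane_iff.2 (Or.inl (by simpa using hx.2)))
  have hlog₂ : ContinuousAt (fun ε : ℝ => log ((R : ℂ) + (x + ε * I))) 0 :=
    ContinuousAt.clog (by fun_prop) (mem_slitPlane_iff.2 (Or.inl (by simp; linarith [hx.1])))
  exact (continuousAt_intervalIntegral_div_sub_vertical hα hφ.aestronglyMeasurable hC _ _).add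
    (continuousAt_const.mul (hlog₁.sub hlog₂))

theorem tendsto_cauchyIntegral_upper {C α : ℝ} (hα : 0 < α) (hφ : Continuous φ)
    (hC : ∀ t : ℝ, ‖φ t - φ x‖ ≤ C * |t - x| ^ α) (hR : support φ ⊆ Ioc (-R) R)
    (hx : x ∈ Ioo (-R) R) :
    Tendsto (fun ε : ℝ => cauchyIntegral φ (x + ε * I)) (𝓝[>] 0)
      (𝓝 (plemeljRegularPart φ x R x + φ x * Real.pi * I)) := by
  have h := (continuousAt_plemeljRegularPart_vertical hα hφ hC hx).tendsto
  simp only [ofReal_zero, zero_mul, add_zero] at h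
  refine ((h.mono_left nhdsWithin_le_nhds).add_const _).congr' ?_
  filter_upwards [self_mem_nhdsWithin] with ε hε
  rw [cauchyIntegral_eq_regularPart_add hφ hR (by simpa using hε)]

theorem tendsto_cauchyIntegral_lower {C α : ℝ} (hα : 0 < α) (hφ : Continuous φ)
    (hC : ∀ t : ℝ, ‖φ t - φ x‖ ≤ C * |t - x| ^ α) (hR : support φ ⊆ Ioc (-R) R)
    (hx : x ∈ Ioo (-R) R) :
    Tendsto (fun ε : ℝ => cauchyIntegral φ (x - ε * I)) (𝓝[>] 0)
      (𝓝 (plemeljRegularPart φ x R x - φ x * Real.pi * I)) := by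
  have h := ((continuousAt_plemeljRegularPart_vertical hα hφ hC hx).comp_of_eq
    continuousAt_neg neg_zero).tendsto
  simp only [Function.comp_def, neg_zero, ofReal_zero, zero_mul, add_zero] at h
  refine ((h.mono_left nhdsWithin_le_nhds).sub_const _).congr' ?_
  filter_upwards [self_mem_nhdsWithin] with ε hε
  rw [cauchyIntegral_eq_regularPart_sub hφ hR (by simpa using hε), ofReal_neg, neg_mul,
    ← sub_eq_add_neg]

end Plemelj

theorem HasCompactSupport.exists_support_subset_Ioc {φ : ℝ → ℂ} (hsupp : HasCompactSupport φ)
    (x : ℝ) : ∃ R, support φ ⊆ Ioc (-R) R ∧ x ∈ Ioo (-R) R := by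
  obtain ⟨R, hR⟩ := (hsupp.isCompact.isBounded.union (isBounded_singleton (x := x))).subset_ball 0
  rw [Real.ball_zero_eq_Ioo] at hR
  exact ⟨R, (subset_tsupport φ).trans (subset_union_left.trans (hR.trans Ioo_subset_Ioc_self)),
    hR (Or.inr rfl)⟩

/-- Cauchy–Plemelj–Sokhotskii on the real line: for a compactly
supported Hölder continuous `φ : ℝ → ℂ` of exponent `α ∈ (0,1]`, the Cauchy integral
`f(z) = (1/2πi)∫ φ(t)/(t − z) dt` is holomorphic off the real axis, vanishes at
infinity, and has one-sided boundary values with jump `f₊ − f₋ = φ`. -/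
theorem stmt16 (α : ℝ) (hα : α ∈ Set.Ioc (0 : ℝ) 1)
    (φ : ℝ → ℂ) (hsupp : HasCompactSupport φ)
    (C : ℝ) (hC : ∀ x y : ℝ, ‖φ x - φ y‖ ≤ C * |x - y| ^ α)
    (f : ℂ → ℂ)
    (hf : ∀ z : ℂ, f z = (1 / (2 * (Real.pi : ℂ) * Complex.I)) * ∫ t : ℝ, φ t / ((t : ℂ) - z)) :
    (∀ z : ℂ, z.im ≠ 0 → DifferentiableAt ℂ f z)
    ∧ Filter.Tendsto f (Bornology.cobounded ℂ) (nhds 0)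
    ∧ ∀ x : ℝ, ∃ fp fm : ℂ,
        Filter.Tendsto (fun ε : ℝ => f ((x : ℂ) + (ε : ℂ) * Complex.I))
          (nhdsWithin 0 (Set.Ioi 0)) (nhds fp)
        ∧ Filter.Tendsto (fun ε : ℝ => f ((x : ℂ) - (ε : ℂ) * Complex.I))
          (nhdsWithin 0 (Set.Ioi 0)) (nhds fm)
        ∧ fp - fm = φ x := by
  set c : ℂ := 1 / (2 * (Real.pi : ℂ) * Complex.I)
  obtain rfl : f = fun z => c * cauchyIntegral φ z := funext hf
  have hφ : Continuous φ := continuous_of_holder hα.1 hC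
  have hφi : Integrable φ := hφ.integrable_of_hasCompactSupport hsupp
  refine ⟨fun z hz => (differentiableAt_cauchyIntegral hφi hz).const_mul c,
    by simpa using (tendsto_cauchyIntegral_cobounded hφi hsupp).const_mul c, fun x => ?_⟩
  obtain ⟨R, hR, hx⟩ := hsupp.exists_support_subset_Ioc x
  have hCx (t : ℝ) : ‖φ t - φ x‖ ≤ C * |t - x| ^ α := hC t x
  refine ⟨_, _, (tendsto_cauchyIntegral_upper hα.1 hφ hCx hR hx).const_mul c,
    (tendsto_cauchyIntegral_lower hα.1 hφ hCx hR hx).const_mul c, ?_⟩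
  simp only [c]
  field_simp
  ring
end

section
/- Let U ⊆ ℂ ∖ ((−∞,0] ∪ {0}) be open, F : U → ℂ holomorphic, R > 0, and set Z_m(c) = (1/2π)(c − c·log c + F(c)), Z_e(c) = −i·c (principal branch of log). Fix ζ ∈ ℂ, ζ ≠ 0. On the tangent space ℂ × ℝ × ℝ (vectors w = (w_c, w_m, w_e)) at a point with base coordinate c ∈ U, define the ℂ-valued linear forms ℓ_m(w) = (iπR/ζ)·Z_m′(c)·w_c − i·w_m − iπRζ·conj(Z_m′(c)·w_c) and ℓ_e(w) = (iπR/ζ)·Z_e′(c)·w_c + i·w_e − iπRζ·conj(Z_e′(c)·w_c), the ℂ-valued 2-form Ω(u,v) = [Z_m′(c)u_c·v_e − Z_m′(c)v_c·u_e] + [Z_e′(c)u_c·v_m − Z_e′(c)v_c·u_m], and the real 2-form ω(u,v) = πR·Re[ Z_m′(c)u_c·conj(Z_e′(c)v_c) − Z_m′(c)v_c·conj(Z_e′(c)u_c) ] + (1/2πR)·(u_m v_e − v_m u_e). Then for all u, v: (1/2πR)·( ℓ_m(u)·ℓ_e(v) − ℓ_m(v)·ℓ_e(u) ) = −(1/(2ζ))·Ω(u,v)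 + ω(u,v) + (ζ/2)·conj(Ω(u,v)). -/
/-!
Write `a = πR`. Each logarithmic differential is `i` times a Laurent polynomial
`ζ⁻¹ α + β + ζ γ` in the twistor parameter, so the wedge `ℓ_m ∧ ℓ_e` is `-1` times a Laurent
polynomial of degree between `-2` and `2`. Its extreme coefficients are multiples of
`dZ_m ∧ dZ_e` and of its conjugate, which vanish because `Z_m` and `Z_e` are functions of the
single complex coordinate `c`. The three remaining coefficients are, after dividing by `2a`,
`-Ω/2`, `ω` (using `2 Re z = z + z̄`) and `Ω̄/2`.
-/

open Complex ComplexConjugate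

section Wedge

variable {V R : Type*}

def wedge [CommRing R] (f g : V → R) (u v : V) : R := f u * g v - f v * g u

theorem wedge_const_mul [CommRing R] (c d : R) (f g : V → R) (u v : V) :
    wedge (fun w => c * f w) (fun w => d * g w) u v = c * d * wedge f g u v := by
  unfold wedge; ring

theorem wedge_laurent [Field R] {ζ : R} (hζ : ζ ≠ 0) (α β γ α' β' γ' : V → R) (u v : V) :
    wedge (fun w => ζ⁻¹ * α w + β w + ζ * γ w) (fun w => ζ⁻¹ * α' w + β' w + ζ * γ' w) u v
      = ζ⁻¹ ^ 2 * wedge α α' u v + ζ⁻¹ * (wedge α β' u v + wedge β α' u v)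
        + (wedge α γ' u v + wedge β β' u v + wedge γ α' u v)
        + ζ * (wedge β γ' u v + wedge γ β' u v) + ζ ^ 2 * wedge γ γ' u v := by
  unfold wedge; field_simp; ring

end Wedge

theorem semiflat_twistor_wedge {V : Type*} {a : ℝ} (ha : a ≠ 0) {ζ : ℂ} (hζ : ζ ≠ 0)
    (dZm dZe : V → ℂ) (hZ : ∀ u v, wedge dZm dZe u v = 0) (dθm dθe : V → ℝ) (u v : V) :
    ((1 / (2 * a) : ℝ) : ℂ) * wedge
        (fun w => I * a / ζ * dZm w - I * dθm w - I * a * ζ * conj (dZm w))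
        (fun w => I * a / ζ * dZe w + I * dθe w - I * a * ζ * conj (dZe w)) u v
      = -(1 / (2 * ζ)) * (wedge dZm (fun w => (dθe w : ℂ)) u v
            + wedge dZe (fun w => (dθm w : ℂ)) u v)
        + ((a * (wedge dZm (fun w => conj (dZe w)) u v).re
            + 1 / (2 * a) * wedge dθm dθe u v : ℝ) : ℂ)
        + ζ / 2 * conj (wedge dZm (fun w => (dθe w : ℂ)) u v
            + wedge dZe (fun w => (dθm w : ℂ)) u v) := by
  have hm : (fun w => I * a / ζ * dZm w - I * dθm w - I * a * ζ * conj (dZm w))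
      = fun w => I * (ζ⁻¹ * (a * dZm w) + -(dθm w : ℂ) + ζ * -(a * conj (dZm w))) := by
    funext w; ring
  have he : (fun w => I * a / ζ * dZe w + I * dθe w - I * a * ζ * conj (dZe w))
      = fun w => I * (ζ⁻¹ * (a * dZe w) + (dθe w : ℂ) + ζ * -(a * conj (dZe w))) := by
    funext w; ring
  have h_top : wedge (fun w => (a : ℂ) * dZm w) (fun w => a * dZe w) u v = 0 := by
    rw [wedge_const_mul, hZ, mul_zero]
  have h_bot : wedge (fun w => -((a : ℂ) * conj (dZm w))) (fun w => -(a * conj (dZe w))) u v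
      = 0 := by
    have h := congrArg conj (hZ u v)
    simp only [wedge, map_sub, map_mul, map_zero] at h
    unfold wedge
    linear_combination (a : ℂ) ^ 2 * h
  rw [hm, he, wedge_const_mul, wedge_laurent hζ, h_top, h_bot, I_mul_I]
  simp only [wedge]
  push_cast
  rw [re_eq_add_conj]
  simp only [map_add, map_sub, map_mul, conj_conj, conj_ofReal]
  have ha' : (a : ℂ) ≠ 0 := ofReal_ne_zero.mpr ha
  field_simp
  ring

theorem stmt19_general (R : ℝ) (hR : 0 < R)
    (Zm Ze : ℂ → ℂ)
    (ζ : ℂ) (hζ : ζ ≠ 0) (c : ℂ)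
    (ℓm ℓe : ℂ × ℝ × ℝ → ℂ)
    (hℓm : ∀ w : ℂ × ℝ × ℝ, ℓm w =
      (Complex.I * (Real.pi : ℂ) * (R : ℂ) / ζ) * (deriv Zm c * w.1)
        - Complex.I * (w.2.1 : ℂ)
        - Complex.I * (Real.pi : ℂ) * (R : ℂ) * ζ * (starRingEnd ℂ) (deriv Zm c * w.1))
    (hℓe : ∀ w : ℂ × ℝ × ℝ, ℓe w =
      (Complex.I * (Real.pi : ℂ) * (R : ℂ) / ζ) * (deriv Ze c * w.1)
        + Complex.I * (w.2.2 : ℂ)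
        - Complex.I * (Real.pi : ℂ) * (R : ℂ) * ζ * (starRingEnd ℂ) (deriv Ze c * w.1))
    (Ω : ℂ × ℝ × ℝ → ℂ × ℝ × ℝ → ℂ)
    (hΩ : ∀ u v : ℂ × ℝ × ℝ, Ω u v =
      (deriv Zm c * u.1 * (v.2.2 : ℂ) - deriv Zm c * v.1 * (u.2.2 : ℂ))
        + (deriv Ze c * u.1 * (v.2.1 : ℂ) - deriv Ze c * v.1 * (u.2.1 : ℂ)))
    (ω : ℂ × ℝ × ℝ → ℂ × ℝ × ℝ → ℝ)
    (hω : ∀ u v : ℂ × ℝ × ℝ, ω u v =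
      Real.pi * R * (deriv Zm c * u.1 * (starRingEnd ℂ) (deriv Ze c * v.1)
        - deriv Zm c * v.1 * (starRingEnd ℂ) (deriv Ze c * u.1)).re
        + (1 / (2 * Real.pi * R)) * (u.2.1 * v.2.2 - v.2.1 * u.2.2)) :
    ∀ u v : ℂ × ℝ × ℝ,
      ((1 / (2 * Real.pi * R) : ℝ) : ℂ) * (ℓm u * ℓe v - ℓm v * ℓe u)
        = -(1 / (2 * ζ)) * Ω u v + ((ω u v : ℝ) : ℂ) + (ζ / 2) * (starRingEnd ℂ) (Ω u v) := by
  intro u v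
  have hℓm' : ℓm = fun w => I * ↑(Real.pi * R) / ζ * (deriv Zm c * w.1) - I * w.2.1
      - I * ↑(Real.pi * R) * ζ * conj (deriv Zm c * w.1) := by
    funext w; rw [hℓm]; push_cast; ring
  have hℓe' : ℓe = fun w => I * ↑(Real.pi * R) / ζ * (deriv Ze c * w.1) + I * w.2.2
      - I * ↑(Real.pi * R) * ζ * conj (deriv Ze c * w.1) := by
    funext w; rw [hℓe]; push_cast; ring
  have h_base : ∀ u v : ℂ × ℝ × ℝ,
      wedge (fun w => deriv Zm c * w.1) (fun w => deriv Ze c * w.1) u v = 0 :=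
    fun u v => by unfold wedge; ring
  rw [hΩ, hω, mul_assoc 2 Real.pi R]
  rw [show ℓm u * ℓe v - ℓm v * ℓe u = wedge ℓm ℓe u v from rfl, hℓm', hℓe']
  exact semiflat_twistor_wedge (by positivity) hζ _ _ h_base (fun w => w.2.1) (fun w => w.2.2) u v

/-- Lemma 6.1, GMN: with the logarithmic differentials `ℓ_m, ℓ_e` of the
semi-flat holomorphic Darboux coordinates at `c ∈ U`, one has
`(1/2πR)(ℓ_m∧ℓ_e) = −Ω/(2ζ) + ω + (ζ/2)Ω̄`. -/
theorem stmt19 (U : Set ℂ) (hU : IsOpen U) (hUs : U ⊆ Complex.slitPlane)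
    (F : ℂ → ℂ) (hF : DifferentiableOn ℂ F U) (R : ℝ) (hR : 0 < R)
    (Zm Ze : ℂ → ℂ)
    (hZm : ∀ c : ℂ, Zm c = ((1 / (2 * Real.pi) : ℝ) : ℂ) * (c - c * Complex.log c + F c))
    (hZe : ∀ c : ℂ, Ze c = -Complex.I * c)
    (ζ : ℂ) (hζ : ζ ≠ 0) (c : ℂ) (hc : c ∈ U)
    (ℓm ℓe : ℂ × ℝ × ℝ → ℂ)
    (hℓm : ∀ w : ℂ × ℝ × ℝ, ℓm w =
      (Complex.I * (Real.pi : ℂ) * (R : ℂ) / ζ) * (deriv Zm c * w.1)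
        - Complex.I * (w.2.1 : ℂ)
        - Complex.I * (Real.pi : ℂ) * (R : ℂ) * ζ * (starRingEnd ℂ) (deriv Zm c * w.1))
    (hℓe : ∀ w : ℂ × ℝ × ℝ, ℓe w =
      (Complex.I * (Real.pi : ℂ) * (R : ℂ) / ζ) * (deriv Ze c * w.1)
        + Complex.I * (w.2.2 : ℂ)
        - Complex.I * (Real.pi : ℂ) * (R : ℂ) * ζ * (starRingEnd ℂ) (deriv Ze c * w.1))
    (Ω : ℂ × ℝ × ℝ → ℂ × ℝ × ℝ → ℂ)
    (hΩ : ∀ u v : ℂ × ℝ × ℝ, Ω u v =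
      (deriv Zm c * u.1 * (v.2.2 : ℂ) - deriv Zm c * v.1 * (u.2.2 : ℂ))
        + (deriv Ze c * u.1 * (v.2.1 : ℂ) - deriv Ze c * v.1 * (u.2.1 : ℂ)))
    (ω : ℂ × ℝ × ℝ → ℂ × ℝ × ℝ → ℝ)
    (hω : ∀ u v : ℂ × ℝ × ℝ, ω u v =
      Real.pi * R * (deriv Zm c * u.1 * (starRingEnd ℂ) (deriv Ze c * v.1)
        - deriv Zm c * v.1 * (starRingEnd ℂ) (deriv Ze c * u.1)).re
        + (1 / (2 * Real.pi * R)) * (u.2.1 * v.2.2 - v.2.1 * u.2.2)) :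
    ∀ u v : ℂ × ℝ × ℝ,
      ((1 / (2 * Real.pi * R) : ℝ) : ℂ) * (ℓm u * ℓe v - ℓm v * ℓe u)
        = -(1 / (2 * ζ)) * Ω u v + ((ω u v : ℝ) : ℂ) + (ζ / 2) * (starRingEnd ℂ) (Ω u v) :=
  stmt19_general R hR Zm Ze ζ hζ c ℓm ℓe hℓm hℓe Ω hΩ ω hω
end
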